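/- arXiv:1402.1582 — 6 statements merged into one kernel-verified Lean document; each statement's English description precedes it below -/
import Mathlib

section
/- Let β > 1 be a quadratic unit (β² = pβ + 1 with integer p ≥ 1, or β² = pβ − 1 with integer p ≥ 3), let m ∈ ℕ with m ≥ ⌊β⌋, and let Ω = ( −mβ/(β² − 1), mβ²/(β² − 1) ) in the first case and Ω = [ 0, mβ/(β − 1) ) in the second case. Then, unless m = ⌊β⌋ and β² = pβ + 1, there exist infinitely many y > 0 such that y ∈ Σ_β(Ω) and y ∉ X^m(β). -/
/-- The spectrum `X^m(β)`: sums `∑_{j=0}^n a_j β^j` with digits `a_j ∈ {0,1,…,m}`. -/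
def Xspec (β : ℝ) (m : ℕ) : Set ℝ :=
  {x | ∃ (n : ℕ) (c : ℕ → ℕ), (∀ j ≤ n, c j ≤ m) ∧
    x = ∑ j ∈ Finset.range (n + 1), (c j : ℝ) * β ^ j}

/-- The cut-and-project set `Σ_β(Ω) = { x ∈ ℤ + ℤβ : x′ ∈ Ω }`, where `x′ = a + bβ′`
for `x = a + bβ`. -/
def sigmaCP (β β' : ℝ) (Ω : Set ℝ) : Set ℝ :=
  {x | ∃ a b : ℤ, x = (a : ℝ) + (b : ℝ) * β ∧ (a : ℝ) + (b : ℝ) * β' ∈ Ω}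

/-!
The Galois images of `X^m(β)` lie in every interval `I ∋ 0` that is stable under the maps
`t ↦ d + β' t` (`d ≤ m`), since `X^m(β)` is generated from `0` by `x ↦ d + β x`; for
`I = Ω` this pins down the lowest digit of `x ∈ X^m(β)` whenever `x'` lies near an end of `Ω`.

If `β² = pβ - 1`, then `0 < β' < 1` and, with `S = mβ/(β - 1)`, a point `y` with
`y' ∈ [S - 1, S)` can only lie in `X^m(β)` as `y = m + β z` with `z ∈ X^m(β)`. Hence
`y ↦ m + β y`, which keeps `y'` in `[S - 1, S)`, never enters `X^m(β)` from outside, and its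
orbit through a small positive lattice point outside `X^m(β)` is infinite.
If `β² = pβ + 1`, then `-1 < β' < 0`, the two ends of `Ω` force the digits `0` and `m` in
turn, and the same argument runs with `y ↦ β (m + β y)`.
-/

open Set

theorem Set.Nonempty.infinite_of_forall_exists_gt {α : Type*} [Preorder α] {s : Set α}
    (hs : s.Nonempty) (h : ∀ a ∈ s, ∃ b ∈ s, a < b) : s.Infinite := fun hfin => by
  obtain ⟨a, ha⟩ := hfin.exists_maximal hs
  obtain ⟨b, hb, hab⟩ := h a ha.prop
  exact ha.not_gt hb hab

open Polynomial in
theorem irrational_of_sq_eq_of_mem_Ioo {β : ℝ} {p e k : ℤ} (hq : β ^ 2 = p * β + e)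
    (hk : β ∈ Ioo (k : ℝ) (k + 1)) : Irrational β := by
  rintro ⟨q, rfl⟩
  have hmonic : (X ^ 2 - C p * X - C e : ℤ[X]).Monic := by monicity!
  have hroot : q ^ 2 - p * q - e = 0 := by
    exact_mod_cast (by linarith : (q : ℝ) ^ 2 - p * q - e = 0)
  obtain ⟨n, rfl⟩ := isInteger_of_is_root_of_monic hmonic (r := q) (by simpa using hroot)
  simp only [algebraMap_int_eq, eq_intCast, Rat.cast_intCast, mem_Ioo] at hk
  have h₁ : k < n := by exact_mod_cast hk.1
  have h₂ : n < k + 1 := by exact_mod_cast hk.2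
  omega

namespace Xspec

variable {β : ℝ} {m : ℕ} {x : ℝ}

theorem zero_mem : (0 : ℝ) ∈ Xspec β m :=
  ⟨0, fun _ => 0, fun _ _ => m.zero_le, by simp⟩

@[elab_as_elim]
theorem induction {P : ℝ → Prop} (zero : P 0)
    (step : ∀ d ≤ m, ∀ z ∈ Xspec β m, P z → P (d + β * z)) (hx : x ∈ Xspec β m) : P x := by
  obtain ⟨n, c, hc, rfl⟩ := hx
  induction n generalizing c with
  | zero => simpa using step (c 0) (hc 0 le_rfl) 0 zero_mem zero
  | succ n ih =>
    have hc' : ∀ j ≤ n, c (j + 1) ≤ m := fun j hj => hc (j + 1) (by omega)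
    convert step (c 0) (hc 0 n.succ.zero_le) _ ⟨n, _, hc', rfl⟩ (ih _ hc') using 1
    rw [Finset.sum_range_succ', Finset.mul_sum, add_comm]
    simp only [pow_succ, pow_zero, mul_one]
    congr 1
    exact Finset.sum_congr rfl fun j _ => by ring

theorem exists_eq_natCast_add_mul (hx : x ∈ Xspec β m) :
    ∃ d ≤ m, ∃ z ∈ Xspec β m, x = d + β * z :=
  induction ⟨0, m.zero_le, 0, zero_mem, by simp⟩ (fun d hd z hz _ => ⟨d, hd, z, hz, rfl⟩) hx

theorem nonneg (hβ : 0 ≤ β) (hx : x ∈ Xspec β m) : 0 ≤ x :=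
  induction le_rfl (fun _ _ _ _ hz => by positivity) hx

theorem eq_zero_or_one_le (hβ : 1 ≤ β) (hx : x ∈ Xspec β m) : x = 0 ∨ 1 ≤ x := by
  refine induction (.inl rfl) (fun d _ z hzX hz => ?_) hx
  have hz0 : 0 ≤ z := nonneg (by linarith) hzX
  rcases d.eq_zero_or_pos with rfl | hd
  · rcases hz with rfl | hz
    · simp
    · right
      push_cast
      nlinarith
  · right
    have : (1 : ℝ) ≤ d := by exact_mod_cast hd
    nlinarith

end Xspec

-- A relation, since `x ↦ x'` is well defined only for irrational `β` (`IsGaloisImage.unique`).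
def IsGaloisImage (β β' x x' : ℝ) : Prop :=
  ∃ a b : ℤ, x = a + b * β ∧ x' = a + b * β'

namespace IsGaloisImage

variable {β β' x x' y y' : ℝ}

theorem intCast (n : ℤ) : IsGaloisImage β β' n n :=
  ⟨n, 0, by simp, by simp⟩

theorem natCast (n : ℕ) : IsGaloisImage β β' n n := by
  exact_mod_cast intCast (n : ℤ)

theorem add (hx : IsGaloisImage β β' x x') (hy : IsGaloisImage β β' y y') :
    IsGaloisImage β β' (x + y) (x' + y') := by
  obtain ⟨a, b, rfl, rfl⟩ := hx
  obtain ⟨c, d, rfl, rfl⟩ := hy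
  exact ⟨a + c, b + d, by push_cast; ring, by push_cast; ring⟩

theorem mul_root {p e : ℤ} (hq : β ^ 2 = p * β + e) (hx : IsGaloisImage β (p - β) x x') :
    IsGaloisImage β (p - β) (β * x) ((p - β) * x') := by
  obtain ⟨a, b, rfl, rfl⟩ := hx
  exact ⟨e * b, a + p * b, by push_cast; linear_combination b * hq,
    by push_cast; linear_combination b * hq⟩

theorem unique (hβ : Irrational β) (hx : IsGaloisImage β β' x x')
    (hy : IsGaloisImage β β' x y') : x' = y' := by
  obtain ⟨a, b, hab, rfl⟩ := hx
  obtain ⟨c, d, hcd, rfl⟩ := hy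
  obtain rfl : b = d := by
    by_contra hbd
    exact (hβ.intCast_mul (sub_ne_zero.2 hbd)).ne_int (c - a) (by push_cast; linarith)
  obtain rfl : a = c := by exact_mod_cast (by linarith : (a : ℝ) = c)
  rfl

end IsGaloisImage

theorem mem_sigmaCP_iff {β β' x : ℝ} {Ω : Set ℝ} :
    x ∈ sigmaCP β β' Ω ↔ ∃ x' ∈ Ω, IsGaloisImage β β' x x' :=
  ⟨fun ⟨a, b, hx, hΩ⟩ => ⟨_, hΩ, a, b, hx, rfl⟩,
    fun ⟨_, hΩ, a, b, hx, hx'⟩ => ⟨a, b, hx, hx' ▸ hΩ⟩⟩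

structure IsInvariantWindow (β' : ℝ) (m : ℕ) (I : Set ℝ) : Prop where
  zero_mem : (0 : ℝ) ∈ I
  natCast_add_mul_mem : ∀ d ≤ m, ∀ t ∈ I, (d : ℝ) + β' * t ∈ I

namespace Xspec

variable {β : ℝ} {p e : ℤ} {m : ℕ} {I : Set ℝ} {x x' : ℝ}

theorem exists_galoisImage_mem (hq : β ^ 2 = p * β + e) (hI : IsInvariantWindow (p - β) m I)
    (hx : x ∈ Xspec β m) : ∃ x' ∈ I, IsGaloisImage β (p - β) x x' :=
  induction ⟨0, hI.zero_mem, by exact_mod_cast IsGaloisImage.intCast 0⟩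
    (fun d hd _ _ ⟨z', hz', hz⟩ => ⟨_, hI.natCast_add_mul_mem d hd z' hz',
      (IsGaloisImage.natCast d).add (hz.mul_root hq)⟩) hx

theorem exists_eq_natCast_add_mul_of_galoisImage (hirr : Irrational β) (hq : β ^ 2 = p * β + e)
    (hI : IsInvariantWindow (p - β) m I) (hx : x ∈ Xspec β m)
    (hc : IsGaloisImage β (p - β) x x') : ∃ d ≤ m, ∃ z ∈ Xspec β m, ∃ z' ∈ I,
      x = d + β * z ∧ x' = d + (p - β) * z' ∧ IsGaloisImage β (p - β) z z' := by
  obtain ⟨d, hd, z, hz, rfl⟩ := exists_eq_natCast_add_mul hx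
  obtain ⟨z', hz', hzc⟩ := exists_galoisImage_mem hq hI hz
  exact ⟨d, hd, z, hz, z', hz', rfl,
    hc.unique hirr ((IsGaloisImage.natCast d).add (hzc.mul_root hq)), hzc⟩

theorem exists_eq_natCast_add_mul_of_le_galoisImage (hirr : Irrational β) (hq : β ^ 2 = p * β + e)
    (hI : IsInvariantWindow (p - β) m I) {hi : ℝ} (hhi : ∀ t ∈ I, (p - β) * t < hi)
    (hx : x ∈ Xspec β m) (hc : IsGaloisImage β (p - β) x x') (hx' : hi + m - 1 ≤ x') :
    ∃ z ∈ Xspec β m, x = m + β * z := by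
  obtain ⟨d, hd, z, hz, z', hz', rfl, rfl, -⟩ :=
    exists_eq_natCast_add_mul_of_galoisImage hirr hq hI hx hc
  obtain rfl : d = m := by
    have := hhi z' hz'
    exact hd.antisymm (Nat.lt_succ_iff.1 (by exact_mod_cast (by linarith : (m : ℝ) < d + 1)))
  exact ⟨z, hz, rfl⟩

theorem mem_of_natCast_add_mul_mem (hirr : Irrational β) (hq : β ^ 2 = p * β + e)
    (hI : IsInvariantWindow (p - β) m I) {hi : ℝ} (hhi : ∀ t ∈ I, (p - β) * t < hi) {y : ℝ}
    (hy : m + β * y ∈ Xspec β m) (hc : IsGaloisImage β (p - β) (m + β * y) x')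
    (hx' : hi + m - 1 ≤ x') : y ∈ Xspec β m := by
  obtain ⟨z, hz, hyz⟩ := exists_eq_natCast_add_mul_of_le_galoisImage hirr hq hI hhi hy hc hx'
  rwa [mul_left_cancel₀ hirr.ne_zero (add_left_cancel hyz)]

theorem mem_of_mul_mem (hirr : Irrational β) (hq : β ^ 2 = p * β + e)
    (hI : IsInvariantWindow (p - β) m I) {lo : ℝ} (hlo : ∀ t ∈ I, lo < (p - β) * t) {y : ℝ}
    (hy : β * y ∈ Xspec β m) (hc : IsGaloisImage β (p - β) (β * y) x') (hx' : x' ≤ lo + 1) :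
    y ∈ Xspec β m := by
  obtain ⟨d, -, z, hz, z', hz', hyz, rfl, -⟩ :=
    exists_eq_natCast_add_mul_of_galoisImage hirr hq hI hy hc
  obtain rfl : d = 0 := by
    have := hlo z' hz'
    exact Nat.lt_one_iff.1 (by exact_mod_cast (by linarith : (d : ℝ) < 1))
  rw [Nat.cast_zero, zero_add] at hyz
  rwa [mul_left_cancel₀ hirr.ne_zero hyz]

end Xspec

theorem sigmaCP_mono {β β' : ℝ} {Ω₁ Ω₂ : Set ℝ} (h : Ω₁ ⊆ Ω₂) :
    sigmaCP β β' Ω₁ ⊆ sigmaCP β β' Ω₂ :=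
  fun _ ⟨a, b, hx, hΩ⟩ => ⟨a, b, hx, h hΩ⟩

section SqEqSubOne

variable {β : ℝ} {p : ℤ} {m : ℕ} {S : ℝ}

theorem conj_mem_Ioo_of_sq_eq_sub_one (hβ : 1 < β) (hq : β ^ 2 = p * β - 1) :
    (p - β : ℝ) ∈ Ioo 0 1 := by
  have : β * (p - β) = 1 := by linear_combination -hq
  constructor <;> nlinarith

theorem irrational_of_sq_eq_sub_one (hβ : 1 < β) (hq : β ^ 2 = p * β - 1) : Irrational β := by
  obtain ⟨h₀, h₁⟩ := conj_mem_Ioo_of_sq_eq_sub_one hβ hq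
  exact irrational_of_sq_eq_of_mem_Ioo (e := -1) (k := p - 1) (by push_cast; linarith)
    ⟨by push_cast; linarith, by push_cast; linarith⟩

theorem conj_mul_mem_Ico_of_sq_eq_sub_one (hβ : 1 < β) (hq : β ^ 2 = p * β - 1)
    (hS : m + (p - β) * S = S) {t : ℝ} (ht : t ∈ Ico 0 S) : (p - β) * t ∈ Ico 0 (S - m) := by
  obtain ⟨h₀, -⟩ := conj_mem_Ioo_of_sq_eq_sub_one hβ hq
  exact ⟨mul_nonneg h₀.le ht.1, by linarith [mul_lt_mul_of_pos_left ht.2 h₀]⟩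

theorem isInvariantWindow_Ico_of_sq_eq_sub_one (hβ : 1 < β) (hq : β ^ 2 = p * β - 1)
    (hS : m + (p - β) * S = S) (hm : 0 < m) : IsInvariantWindow (p - β) m (Ico 0 S) where
  zero_mem := by
    have : (0 : ℝ) < m := by exact_mod_cast hm
    exact ⟨le_rfl, by nlinarith⟩
  natCast_add_mul_mem d hd t ht := by
    obtain ⟨h₀, h₁⟩ := conj_mul_mem_Ico_of_sq_eq_sub_one hβ hq hS ht
    have : (d : ℝ) ≤ m := by exact_mod_cast hd
    exact ⟨by positivity, by linarith⟩

theorem exists_galoisImage_mem_Ico_of_sq_eq_sub_one (hβ : 1 < β) (hq : β ^ 2 = p * β - 1)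
    (hm : 0 < m) : ∃ y y', IsGaloisImage β (p - β) y y' ∧ 0 < y ∧ y < m + β ∧
      y' ∈ Ico (S - 1) S := by
  obtain ⟨-, h₁⟩ := conj_mem_Ioo_of_sq_eq_sub_one hβ hq
  have hm : (1 : ℝ) ≤ m := by exact_mod_cast hm
  set D := β - (p - β)
  have hD0 : 0 < D := by linarith
  -- `y = y' - k D` with `y' ∈ [S - 1, S)`, and `k` puts `y` in `(0, D + 1)`.
  set k := ⌈(S - 1) / D⌉ - 1
  set c := ⌈S - 1 + k * (p - β)⌉
  have hk₁ : k * D < S - 1 := by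
    have := Int.ceil_lt_add_one ((S - 1) / D)
    rw [← lt_div_iff₀ hD0]; push_cast [k]; linarith
  have hk₂ : S - 1 ≤ (k + 1) * D := by
    rw [← div_le_iff₀ hD0]; push_cast [k]; simpa using Int.le_ceil ((S - 1) / D)
  have hc₁ : S - 1 + k * (p - β) ≤ c := Int.le_ceil _
  have hc₂ : c < S - 1 + k * (p - β) + 1 := Int.ceil_lt_add_one _
  refine ⟨c - k * β, c - k * (p - β), ⟨c, -k, by push_cast; ring, by push_cast; ring⟩,
    by nlinarith, by nlinarith, by linarith, by linarith⟩

theorem not_mem_Xspec_of_sq_eq_sub_one (hβ : 1 < β) (hq : β ^ 2 = p * β - 1)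
    (hS : m + (p - β) * S = S) (hm : β < m + 1) {y y' : ℝ}
    (hc : IsGaloisImage β (p - β) y y') (hy : y < m + β) (hy' : y' ∈ Ico (S - 1) S) :
    y ∉ Xspec β m := by
  have hirr := irrational_of_sq_eq_sub_one hβ hq
  have hm0 : 0 < m := by exact_mod_cast (by linarith : (0 : ℝ) < m)
  intro hyX
  obtain ⟨z, hz, rfl⟩ := Xspec.exists_eq_natCast_add_mul_of_le_galoisImage hirr (e := -1)
    (by push_cast; linarith) (isInvariantWindow_Ico_of_sq_eq_sub_one hβ hq hS hm0)
    (fun t ht => (conj_mul_mem_Ico_of_sq_eq_sub_one hβ hq hS ht).2) hyX hc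
    (by linarith [hy'.1])
  rcases Xspec.eq_zero_or_one_le hβ.le hz with rfl | hz
  · have : y' = m := hc.unique hirr (by simpa using IsGaloisImage.natCast m)
    have : β * (p - β) = 1 := by linear_combination -hq
    nlinarith [hy'.1]
  · nlinarith

theorem natCast_add_conj_mul_mem_Ico_of_sq_eq_sub_one (hβ : 1 < β) (hq : β ^ 2 = p * β - 1)
    (hS : m + (p - β) * S = S) {t : ℝ} (ht : t ∈ Ico (S - 1) S) :
    m + (p - β) * t ∈ Ico (S - 1) S := by
  obtain ⟨h₀, h₁⟩ := conj_mem_Ioo_of_sq_eq_sub_one hβ hq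
  constructor <;> nlinarith [ht.1, ht.2]

theorem natCast_add_mul_not_mem_Xspec_of_sq_eq_sub_one (hβ : 1 < β) (hq : β ^ 2 = p * β - 1)
    (hS : m + (p - β) * S = S) (hm : 0 < m) {y y' : ℝ} (hc : IsGaloisImage β (p - β) y y')
    (hy' : y' ∈ Ico (S - 1) S) (hyX : y ∉ Xspec β m) : m + β * y ∉ Xspec β m := by
  have hq' : β ^ 2 = p * β + ((-1 : ℤ) : ℝ) := by push_cast; linarith
  exact fun h => hyX (Xspec.mem_of_natCast_add_mul_mem (irrational_of_sq_eq_sub_one hβ hq) hq'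
    (isInvariantWindow_Ico_of_sq_eq_sub_one hβ hq hS hm)
    (fun t ht => (conj_mul_mem_Ico_of_sq_eq_sub_one hβ hq hS ht).2) h
    ((IsGaloisImage.natCast m).add (hc.mul_root hq'))
    (by linarith [(natCast_add_conj_mul_mem_Ico_of_sq_eq_sub_one hβ hq hS hy').1]))

theorem infinite_of_sq_eq_sub_one (hβ : 1 < β) (hq : β ^ 2 = p * β - 1)
    (hS : m + (p - β) * S = S) (hm : β < m + 1) :
    {y | 0 < y ∧ y ∈ sigmaCP β (p - β) (Ico 0 S) ∧ y ∉ Xspec β m}.Infinite := by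
  have hq' : β ^ 2 = p * β + ((-1 : ℤ) : ℝ) := by push_cast; linarith
  have hm0 : 0 < m := by exact_mod_cast (by linarith : (0 : ℝ) < m)
  have hS1 : 1 ≤ S := by
    have : (1 : ℝ) ≤ m := by exact_mod_cast hm0
    nlinarith
  refine Set.Infinite.mono (s := {y | 0 < y ∧
    y ∈ sigmaCP β (p - β) (Ico (S - 1) S) ∧ y ∉ Xspec β m})
    (fun y hy => ⟨hy.1, sigmaCP_mono (Ico_subset_Ico (by linarith) le_rfl) hy.2.1, hy.2.2⟩)
    (Set.Nonempty.infinite_of_forall_exists_gt ?_ ?_)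
  · obtain ⟨y, y', hc, hy₀, hy, hy'⟩ := exists_galoisImage_mem_Ico_of_sq_eq_sub_one hβ hq hm0
    exact ⟨y, hy₀, mem_sigmaCP_iff.2 ⟨y', hy', hc⟩,
      not_mem_Xspec_of_sq_eq_sub_one hβ hq hS hm hc hy hy'⟩
  · rintro y ⟨hy₀, hyW, hyX⟩
    obtain ⟨y', hy', hc⟩ := mem_sigmaCP_iff.1 hyW
    exact ⟨m + β * y, ⟨by positivity, mem_sigmaCP_iff.2 ⟨_,
      natCast_add_conj_mul_mem_Ico_of_sq_eq_sub_one hβ hq hS hy',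
      (IsGaloisImage.natCast m).add (hc.mul_root hq')⟩,
      natCast_add_mul_not_mem_Xspec_of_sq_eq_sub_one hβ hq hS hm0 hc hy' hyX⟩, by nlinarith⟩

end SqEqSubOne

section SqEqAddOne

variable {β : ℝ} {p : ℤ} {m : ℕ} {L R : ℝ}

theorem conj_mem_Ioo_of_sq_eq_add_one (hβ : 1 < β) (hq : β ^ 2 = p * β + 1) :
    (p - β : ℝ) ∈ Ioo (-1) 0 := by
  have : β * (p - β) = -1 := by linear_combination -hq
  constructor <;> nlinarith

theorem irrational_of_sq_eq_add_one (hβ : 1 < β) (hq : β ^ 2 = p * β + 1) : Irrational β := by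
  obtain ⟨h₀, h₁⟩ := conj_mem_Ioo_of_sq_eq_add_one hβ hq
  exact irrational_of_sq_eq_of_mem_Ioo (e := 1) (k := p) (by push_cast; linarith)
    ⟨by linarith, by linarith⟩

theorem conj_mul_mem_Ioo_of_sq_eq_add_one (hβ : 1 < β) (hq : β ^ 2 = p * β + 1)
    (hL : (p - β) * L = R - m) (hR : (p - β) * R = L) {t : ℝ} (ht : t ∈ Ioo L R) :
    (p - β) * t ∈ Ioo L (R - m) :=
  ⟨by nlinarith [ht.2], by nlinarith [ht.1]⟩

theorem isInvariantWindow_Ioo_of_sq_eq_add_one (hβ : 1 < β) (hq : β ^ 2 = p * β + 1)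
    (hL : (p - β) * L = R - m) (hR : (p - β) * R = L) (hm : 0 < m) :
    IsInvariantWindow (p - β) m (Ioo L R) where
  zero_mem := by
    have : (0 : ℝ) < m := by exact_mod_cast hm
    have hRm : R * (1 - (p - β) ^ 2) = m := by linear_combination -hL - (p - β) * hR
    have hR0 : 0 < R := pos_of_mul_pos_left (hRm ▸ this) (by nlinarith)
    exact ⟨by nlinarith, hR0⟩
  natCast_add_mul_mem d hd t ht := by
    obtain ⟨h₀, h₁⟩ := conj_mul_mem_Ioo_of_sq_eq_add_one hβ hq hL hR ht
    have : (d : ℝ) ≤ m := by exact_mod_cast hd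
    exact ⟨by linarith [d.cast_nonneg (α := ℝ)], by linarith⟩

theorem exists_galoisImage_mem_Ioc_of_sq_eq_add_one (hβ : 1 < β) (hq : β ^ 2 = p * β + 1)
    (hL : (p - β) * L = R - m) (hR : (p - β) * R = L) (hm : β < m) :
    ∃ y y', IsGaloisImage β (p - β) y y' ∧ 0 < y ∧ y < (m - p) * β ∧
      y' ∈ Ioc L (L + 1) := by
  obtain ⟨h₀, h₁⟩ := conj_mem_Ioo_of_sq_eq_add_one hβ hq
  have hpL : p * L = -m := by linear_combination hL - β * hR - R * hq
  have hp0 : (0 : ℝ) < p := by linarith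
  have hp : (1 : ℝ) ≤ p := by exact_mod_cast (Int.cast_pos.1 hp0 : 0 < p)
  have hj : (1 : ℝ) ≤ m - p := by
    have : p < (m : ℤ) := by exact_mod_cast (by linarith : (p : ℝ) < m)
    exact_mod_cast (by omega : (1 : ℤ) ≤ m - p)
  set c := ⌈-L - 1 + (m - p) * (p - β)⌉
  have hc₁ : -L - 1 + (m - p) * (p - β) ≤ c := Int.le_ceil _
  have hc₂ : c < -L - 1 + (m - p) * (p - β) + 1 := Int.ceil_lt_add_one _
  have hc₀ : (0 : ℝ) < c := by
    have : p * (-L - 1 + (m - p) * (p - β)) = (m - p) * (p - β) ^ 2 := by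
      linear_combination -hpL - (m - p) * hq
    have : 0 < p * (-L - 1 + (m - p) * (p - β)) := by rw [this]; nlinarith
    linarith [pos_of_mul_pos_right this hp0.le]
  have hD : 2 < β - (p - β) := by nlinarith
  have : (m : ℝ) < p * (m - p) * (β - (p - β)) := by
    nlinarith [mul_lt_mul_of_pos_left hD (by positivity : (0 : ℝ) < p * (m - p)),
      mul_nonneg (sub_nonneg.2 hp) (sub_nonneg.2 hj)]
  refine ⟨(m - p) * β - c, (m - p) * (p - β) - c,
    ⟨-c, m - p, by push_cast; ring, by push_cast; ring⟩, by nlinarith, by linarith, by linarith,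
    by linarith⟩

theorem not_mem_Xspec_of_sq_eq_add_one (hβ : 1 < β) (hq : β ^ 2 = p * β + 1)
    (hL : (p - β) * L = R - m) (hR : (p - β) * R = L) (hm : 0 < m) {y y' : ℝ}
    (hc : IsGaloisImage β (p - β) y y') (hy : y < (m - p) * β) (hy' : y' ∈ Ioc L (L + 1)) :
    y ∉ Xspec β m := by
  obtain ⟨-, h₁⟩ := conj_mem_Ioo_of_sq_eq_add_one hβ hq
  have hirr := irrational_of_sq_eq_add_one hβ hq
  have hq' : β ^ 2 = p * β + ((1 : ℤ) : ℝ) := by push_cast; exact hq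
  have hI := isInvariantWindow_Ioo_of_sq_eq_add_one hβ hq hL hR hm
  intro hyX
  obtain ⟨d, -, z, hz, z', hz', rfl, rfl, hzc⟩ :=
    Xspec.exists_eq_natCast_add_mul_of_galoisImage hirr hq' hI hyX hc
  obtain rfl : d = 0 := by
    have := (conj_mul_mem_Ioo_of_sq_eq_add_one hβ hq hL hR hz').1
    exact Nat.lt_one_iff.1 (by exact_mod_cast (by linarith [hy'.2] : (d : ℝ) < 1))
  obtain ⟨d, -, v, hv, v', hv', rfl, rfl, -⟩ :=
    Xspec.exists_eq_natCast_add_mul_of_galoisImage hirr hq' hI hz hzc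
  -- `y = β (d + β v)`, and `y' ≤ L + 1` forces `d ≥ m - p`.
  have hd : (m - p : ℝ) ≤ d := by
    have := mul_lt_mul_of_neg_left (conj_mul_mem_Ioo_of_sq_eq_add_one hβ hq hL hR hv').2 h₁
    have : (m : ℝ) - d < p + 1 := by nlinarith [hy'.2]
    have : (m : ℤ) - d < p + 1 := by exact_mod_cast this
    exact_mod_cast (by omega : (m : ℤ) - p ≤ d)
  have := Xspec.nonneg (by linarith) hv
  nlinarith

theorem natCast_add_conj_mul_mem_Ico_of_sq_eq_add_one (hβ : 1 < β) (hq : β ^ 2 = p * β + 1)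
    (hL : (p - β) * L = R - m) {t : ℝ} (ht : t ∈ Ioc L (L + 1)) :
    m + (p - β) * t ∈ Ico (R - 1) R := by
  constructor <;> nlinarith [ht.1, ht.2]

theorem conj_mul_mem_Ioc_of_sq_eq_add_one (hβ : 1 < β) (hq : β ^ 2 = p * β + 1)
    (hR : (p - β) * R = L) {t : ℝ} (ht : t ∈ Ico (R - 1) R) :
    (p - β) * t ∈ Ioc L (L + 1) := by
  constructor <;> nlinarith [ht.1, ht.2]

theorem mul_natCast_add_mul_not_mem_Xspec_of_sq_eq_add_one (hβ : 1 < β)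
    (hq : β ^ 2 = p * β + 1) (hL : (p - β) * L = R - m) (hR : (p - β) * R = L) (hm : 0 < m)
    {y y' : ℝ} (hc : IsGaloisImage β (p - β) y y') (hy' : y' ∈ Ioc L (L + 1))
    (hyX : y ∉ Xspec β m) : β * (m + β * y) ∉ Xspec β m := by
  have hirr := irrational_of_sq_eq_add_one hβ hq
  have hq' : β ^ 2 = p * β + ((1 : ℤ) : ℝ) := by push_cast; exact hq
  have hI := isInvariantWindow_Ioo_of_sq_eq_add_one hβ hq hL hR hm
  have hz := (IsGaloisImage.natCast m).add (hc.mul_root hq')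
  have hzX : m + β * y ∉ Xspec β m := fun h => hyX <|
    Xspec.mem_of_natCast_add_mul_mem hirr hq' hI
      (fun t ht => (conj_mul_mem_Ioo_of_sq_eq_add_one hβ hq hL hR ht).2) h hz
      (by linarith [(natCast_add_conj_mul_mem_Ico_of_sq_eq_add_one hβ hq hL hy').1])
  exact fun h => hzX <| Xspec.mem_of_mul_mem hirr hq' hI
    (fun t ht => (conj_mul_mem_Ioo_of_sq_eq_add_one hβ hq hL hR ht).1) h (hz.mul_root hq')
    (conj_mul_mem_Ioc_of_sq_eq_add_one hβ hq hR
      (natCast_add_conj_mul_mem_Ico_of_sq_eq_add_one hβ hq hL hy')).2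

theorem infinite_of_sq_eq_add_one (hβ : 1 < β) (hq : β ^ 2 = p * β + 1)
    (hL : (p - β) * L = R - m) (hR : (p - β) * R = L) (hm : β < m) :
    {y | 0 < y ∧ y ∈ sigmaCP β (p - β) (Ioo L R) ∧ y ∉ Xspec β m}.Infinite := by
  have hq' : β ^ 2 = p * β + ((1 : ℤ) : ℝ) := by push_cast; exact hq
  have hm0 : 0 < m := by exact_mod_cast (by linarith : (0 : ℝ) < m)
  have hLR : L + 1 < R := by
    have hRm : R * (1 - (p - β)) * (1 + (p - β)) = m := by
      linear_combination -hL - (p - β) * hR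
    nlinarith
  refine Set.Infinite.mono (s := {y | 0 < y ∧
    y ∈ sigmaCP β (p - β) (Ioc L (L + 1)) ∧ y ∉ Xspec β m})
    (fun y hy => ⟨hy.1, sigmaCP_mono (Ioc_subset_Ioo_right hLR) hy.2.1, hy.2.2⟩)
    (Set.Nonempty.infinite_of_forall_exists_gt ?_ ?_)
  · obtain ⟨y, y', hc, hy₀, hy, hy'⟩ :=
      exists_galoisImage_mem_Ioc_of_sq_eq_add_one hβ hq hL hR hm
    exact ⟨y, hy₀, mem_sigmaCP_iff.2 ⟨y', hy', hc⟩,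
      not_mem_Xspec_of_sq_eq_add_one hβ hq hL hR hm0 hc hy hy'⟩
  · rintro y ⟨hy₀, hyW, hyX⟩
    obtain ⟨y', hy', hc⟩ := mem_sigmaCP_iff.1 hyW
    refine ⟨β * (m + β * y), ⟨by positivity, mem_sigmaCP_iff.2 ⟨_,
      conj_mul_mem_Ioc_of_sq_eq_add_one hβ hq hR
        (natCast_add_conj_mul_mem_Ico_of_sq_eq_add_one hβ hq hL hy'),
      ((IsGaloisImage.natCast m).add (hc.mul_root hq')).mul_root hq'⟩,
      mul_natCast_add_mul_not_mem_Xspec_of_sq_eq_add_one hβ hq hL hR hm0 hc hy' hyX⟩,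
      by nlinarith [lt_mul_left hy₀ hβ, lt_mul_left (by positivity : 0 < β * y) hβ]⟩

end SqEqAddOne

/-- Proposition: unless `m = ⌊β⌋` and `β² = pβ + 1`, there are infinitely many `y > 0` with
`y ∈ Σ_β(Ω)` and `y ∉ X^m(β)`. -/
theorem cutProject_not_spectrum_infinite (β : ℝ) (p : ℤ) (m : ℕ) (Ω : Set ℝ)
    (hβ : 1 < β)
    (hcase :
      (1 ≤ p ∧ β ^ 2 = p * β + 1 ∧
        Ω = Set.Ioo (-((m : ℝ) * β) / (β ^ 2 - 1)) ((m : ℝ) * β ^ 2 / (β ^ 2 - 1))) ∨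
      (3 ≤ p ∧ β ^ 2 = p * β - 1 ∧
        Ω = Set.Ico (0 : ℝ) ((m : ℝ) * β / (β - 1))))
    (hm : ⌊β⌋ ≤ (m : ℤ))
    (hexc : ¬((m : ℤ) = ⌊β⌋ ∧ β ^ 2 = p * β + 1)) :
    {y : ℝ | 0 < y ∧ y ∈ sigmaCP β ((p : ℝ) - β) Ω ∧ y ∉ Xspec β m}.Infinite := by
  rcases hcase with ⟨-, hq, rfl⟩ | ⟨-, hq, rfl⟩
  · have hβm : β < m := by
      exact_mod_cast Int.floor_lt.1 (lt_of_le_of_ne hm fun h => hexc ⟨h.symm, hq⟩)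
    have hβ2 : β ^ 2 - 1 ≠ 0 := by nlinarith
    refine infinite_of_sq_eq_add_one hβ hq ?_ ?_ hβm
    · field_simp
      linear_combination (m : ℝ) * hq
    · field_simp
      linear_combination (-(m : ℝ)) * hq
  · have hβ1 : β - 1 ≠ 0 := by linarith
    refine infinite_of_sq_eq_sub_one hβ hq ?_ (by exact_mod_cast Int.floor_le_iff.1 hm)
    field_simp
    linear_combination (-(m : ℝ)) * hq
end

section
/- Let β > 1 be the root of x² − px + 1 with integer p ≥ 3, and let m ∈ ℕ with m ≥ ⌊β⌋ = p − 1. Then every y ∈ X^m(β) can be written as y = ∑_{k=0}^{n−1} r_k β^k with digits r_k ∈ {0,1,…,m} of the following form: there exists j with 0 ≤ j ≤ n such that r_k = m for all k < j; if j < n then r_j ∈ {0,1,…,m−1}; r_k ∈ {0,1,…,p−1} for all k > j; and for every i with j < i ≤ n−1 the finite digit word r_i r_{i−1} ⋯ r_{j+1} (read from most significant digit) is lexicographically strictly smaller than the infinite word (p−1)(p−2)(p−2)(p−2)⋯. -/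
/-!
Write elements of `X^m(β)` as digit strings `c₀ c₁ ⋯` (least significant first, `q = p`) and
normalise them by two carries, both instances of `q β^(k+1) = β^(k+2) + β^k`: a digit `≥ q` at
`k + 1` loses `q` and one is added at `k` and `k + 2`; a forbidden factor
`(q-1)(q-2)⋯(q-2)(q-1)` on `k + 1, …, s` becomes zeros and one is added at `k` and `s + 1`. Each
carry keeps the value and lowers the digit sum, so the process ends, with a string `u c m^j`
whose part `u` has no digit `≥ q` and no forbidden factor: that is the lexicographic condition.

Carries are performed at the lowest site above the initial run `m^j`, and the unit they push
down to position `k` has to fit under `m`. It does because a word over `{0, …, q-1}` without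
forbidden factor is worth at most the word `(q-1)(q-2)⋯(q-2)` of the same length; the invariant
carried along is `Admissible`.
-/

namespace BetaExpansion

open Finset

variable {β : ℝ} {q m : ℕ}

lemma natCast_sub_one_lt (hβ : 1 < β) (he : β ^ 2 = q * β - 1) : (q : ℝ) - 1 < β := by
  nlinarith

lemma lt_natCast (hβ : 1 < β) (he : β ^ 2 = q * β - 1) : β < q := by
  nlinarith

lemma pow_add_two_add_pow (he : β ^ 2 = q * β - 1) (k : ℕ) :
    β ^ (k + 2) + β ^ k = q * β ^ (k + 1) := by
  linear_combination β ^ k * he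

lemma sum_Icc_add_one_right {M : Type*} [AddCommMonoid M] (f : ℕ → M) {a b : ℕ} (hab : a ≤ b) :
    ∑ k ∈ Icc a (b + 1), f k = f a + (∑ k ∈ Ioc a b, f k + f (b + 1)) := by
  rw [Icc_eq_cons_Ioc (by omega), sum_cons, sum_Ioc_succ_top hab]

lemma sum_add_sum_eq_of_eqOn_sdiff {M : Type*} [AddCommMonoid M] {f g : ℕ → M} {s u : Finset ℕ}
    (hs : s ⊆ u) (h : ∀ k ∈ u, k ∉ s → g k = f k) :
    ∑ k ∈ u, g k + ∑ k ∈ s, f k = ∑ k ∈ u, f k + ∑ k ∈ s, g k := by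
  rw [← sum_sdiff hs (f := f), ← sum_sdiff hs (f := g),
    sum_congr rfl fun k hk => h k (mem_sdiff.1 hk).1 (mem_sdiff.1 hk).2]
  abel

lemma sum_range_eq_of_le {M : Type*} [AddCommMonoid M] {f : ℕ → M} {n n' : ℕ} (h : n ≤ n')
    (hf : ∀ k, n ≤ k → f k = 0) : ∑ k ∈ range n', f k = ∑ k ∈ range n, f k :=
  (sum_subset (range_subset_range.2 h) fun k _ hk => hf k (by simpa using hk)).symm

def digitVal (β : ℝ) (c : ℕ → ℕ) (n : ℕ) : ℝ := ∑ k ∈ range n, (c k : ℝ) * β ^ k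

lemma digitVal_succ (c : ℕ → ℕ) (n : ℕ) : digitVal β c (n + 1) = digitVal β c n + c n * β ^ n :=
  sum_range_succ _ _

lemma digitVal_congr {c c' : ℕ → ℕ} {n : ℕ} (h : ∀ k < n, c k = c' k) :
    digitVal β c n = digitVal β c' n :=
  sum_congr rfl fun k hk => by rw [h k (mem_range.1 hk)]

lemma digitVal_add_sum_Ioc (c : ℕ → ℕ) {a b : ℕ} (hab : a ≤ b) :
    digitVal β c (b + 1) = digitVal β c (a + 1) + ∑ k ∈ Ioc a b, (c k : ℝ) * β ^ k := by
  rw [digitVal, digitVal, ← sum_range_add_sum_Ico _ (m := a + 1) (by omega),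
    Ico_add_one_add_one_eq_Ioc]

/-- Read downwards from position `s`, the digits of `c` on `(x, s]` are the first `s - x`
letters of `(q-1)(q-2)(q-2)⋯`. -/
def IsBoundPrefix (q : ℕ) (c : ℕ → ℕ) (x s : ℕ) : Prop :=
  x < s ∧ c s = q - 1 ∧ ∀ t, x < t → t < s → c t = q - 2

def IsForbiddenFactor (q : ℕ) (c : ℕ → ℕ) (x s : ℕ) : Prop :=
  c x = q - 1 ∧ IsBoundPrefix q c x s

def IsCarrySite (q : ℕ) (c : ℕ → ℕ) (x : ℕ) : Prop :=
  q ≤ c x ∨ ∃ s, IsForbiddenFactor q c x s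

lemma sum_Ioc_of_isBoundPrefix (he : β ^ 2 = q * β - 1) (hq : 2 ≤ q) {c : ℕ → ℕ} {x s : ℕ}
    (h : IsBoundPrefix q c x s) :
    ∑ k ∈ Ioc x s, (c k : ℝ) * β ^ k = β ^ (s + 1) - β ^ (x + 1) + β ^ x := by
  obtain ⟨hxs, htop, hmid⟩ := h
  obtain ⟨d, rfl⟩ : ∃ d, s = x + 1 + d := ⟨s - (x + 1), by omega⟩
  induction d generalizing x with
  | zero =>
    rw [add_zero] at htop ⊢
    have hc : (c (x + 1) : ℝ) + 1 = q := by exact_mod_cast (by omega : c (x + 1) + 1 = q)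
    rw [Nat.Ioc_succ_singleton, sum_singleton]
    linear_combination (β ^ (x + 1)) * hc - pow_add_two_add_pow he x
  | succ d ih =>
    have hc : (c (x + 1) : ℝ) + 2 = q := by
      exact_mod_cast (by have := hmid (x + 1) (by omega) (by omega); omega : c (x + 1) + 2 = q)
    have hrest := ih (x := x + 1) (by omega)
      (by rwa [show x + 1 + 1 + d = x + 1 + (d + 1) by omega])
      (fun t h₁ h₂ => hmid t (by omega) (by omega))
    rw [← sum_Ioc_consecutive _ (Nat.le_succ x) (by omega), Nat.Ioc_succ_singleton, sum_singleton,
      show x + 1 + (d + 1) = x + 1 + 1 + d by omega, hrest]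
    linear_combination (β ^ (x + 1)) * hc - pow_add_two_add_pow he x

lemma sum_Ioc_of_isForbiddenFactor (he : β ^ 2 = q * β - 1) (hq : 2 ≤ q) {c : ℕ → ℕ} {a s : ℕ}
    (h : IsForbiddenFactor q c (a + 1) s) :
    ∑ k ∈ Ioc a s, (c k : ℝ) * β ^ k = β ^ a + β ^ (s + 1) := by
  obtain ⟨hbot, hpre⟩ := h
  have hc : (c (a + 1) : ℝ) + 1 = q := by exact_mod_cast (by omega : c (a + 1) + 1 = q)
  rw [← sum_Ioc_consecutive _ (Nat.le_succ a) hpre.1.le, Nat.Ioc_succ_singleton, sum_singleton,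
    sum_Ioc_of_isBoundPrefix he hq hpre]
  linear_combination (β ^ (a + 1)) * hc - pow_add_two_add_pow he a

/-- Both bounds are proved together: below a top digit `q - 1` the rest of the word lies under a
prefix of the bound, and there it must stay `β^b` below the bound. -/
theorem sum_Ioc_le_of_forall_not_isCarrySite (hβ : 1 < β) (he : β ^ 2 = q * β - 1) (hq : 2 ≤ q)
    {c : ℕ → ℕ} {a b : ℕ} (hab : a ≤ b) (hno : ∀ k, a < k → k ≤ b → ¬IsCarrySite q c k) :
    ∑ k ∈ Ioc a b, (c k : ℝ) * β ^ k ≤ β ^ (b + 1) - β ^ (a + 1) + β ^ a ∧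
      ∀ s, IsBoundPrefix q c b s →
        ∑ k ∈ Ioc a b, (c k : ℝ) * β ^ k + β ^ b ≤ β ^ (b + 1) - β ^ (a + 1) + β ^ a := by
  induction b, hab using Nat.le_induction with
  | base => simp [(pow_pos (zero_lt_one.trans hβ) a).le]
  | succ b hab ih =>
    obtain ⟨ih₁, ih₂⟩ := ih fun k h₁ h₂ => hno k h₁ (by omega)
    have hsite := hno (b + 1) (by omega) le_rfl
    have hlt : c (b + 1) < q := by by_contra h; exact hsite (Or.inl (by omega))
    have hpow : ((q : ℝ) - 1) * β ^ (b + 1) ≤ β ^ (b + 2) := by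
      calc ((q : ℝ) - 1) * β ^ (b + 1) ≤ β * β ^ (b + 1) :=
            mul_le_mul_of_nonneg_right (natCast_sub_one_lt hβ he).le (by positivity)
        _ = β ^ (b + 2) := by ring
    have key := pow_add_two_add_pow he b
    rw [sum_Ioc_succ_top hab, show b + 1 + 1 = b + 2 by rfl]
    rcases (by omega : c (b + 1) + 1 = q ∨ c (b + 1) + 2 = q ∨ c (b + 1) + 3 ≤ q)
      with hc | hc | hc
    · have hcR : (c (b + 1) : ℝ) + 1 = q := by exact_mod_cast hc
      refine ⟨?_, fun s hs => (hsite (Or.inr ⟨s, by omega, hs⟩)).elim⟩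
      have := ih₂ (b + 1) ⟨by omega, by omega, fun t h₁ h₂ => by omega⟩
      linear_combination this + β ^ (b + 1) * hcR - key
    · have hcR : (c (b + 1) : ℝ) + 2 = q := by exact_mod_cast hc
      refine ⟨?_, fun s ⟨hbs, htop, hmid⟩ => ?_⟩
      · linear_combination ih₁ + hpow + β ^ (b + 1) * hcR
      · have := ih₂ s ⟨by omega, htop, fun t h₁ h₂ =>
          if ht : t = b + 1 then by rw [ht]; omega else hmid t (by omega) h₂⟩
        linear_combination this + β ^ (b + 1) * hcR - key
    · have hcR : (c (b + 1) : ℝ) + 3 ≤ q := by exact_mod_cast hc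
      have : (c (b + 1) : ℝ) * β ^ (b + 1) ≤ ((q : ℝ) - 3) * β ^ (b + 1) :=
        mul_le_mul_of_nonneg_right (by linarith) (by positivity)
      have := pow_pos (zero_lt_one.trans hβ) (b + 1)
      exact ⟨by linarith, fun _ _ => by linarith⟩

lemma sub_one_mul_sum_Ioc (he : β ^ 2 = q * β - 1) {a b : ℕ} (hab : a ≤ b) :
    ((q : ℝ) - 1) * ∑ k ∈ Ioc a b, β ^ (k + 1) =
      β ^ (b + 2) - β ^ (a + 2) + ∑ k ∈ Ioc a b, β ^ k := by
  induction b, hab using Nat.le_induction with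
  | base => simp
  | succ b hab ih =>
    rw [sum_Ioc_succ_top hab, sum_Ioc_succ_top hab, mul_add, ih]
    linear_combination -pow_add_two_add_pow he (b + 1)

theorem room_of_forall_not_isCarrySite (hβ : 1 < β) (he : β ^ 2 = q * β - 1) (hq : 2 ≤ q)
    (hmq : q - 1 ≤ m) {c : ℕ → ℕ} {j a : ℕ} (hrun : ∀ k < j, c k = m) (hcj : c j < m)
    (hja : j ≤ a) (hno : ∀ k, j < k → k ≤ a → ¬IsCarrySite q c k) :
    β * digitVal β c (a + 1) + β ^ a ≤ β * digitVal β (fun _ => m) (a + 1) := by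
  have hβ0 : 0 < β := by linarith
  have hlow : β * digitVal β c (j + 1) + β ^ (j + 1) ≤ β * digitVal β (fun _ => m) (j + 1) := by
    rw [digitVal_succ, digitVal_succ, digitVal_congr hrun]
    have : (c j : ℝ) + 1 ≤ m := by exact_mod_cast hcj
    have := mul_le_mul_of_nonneg_right this (pow_pos hβ0 (j + 1)).le
    rw [pow_succ] at this ⊢
    linarith
  have hj : β ^ j ≤ β ^ (j + 1) := pow_le_pow_right₀ hβ.le (Nat.le_succ j)
  rcases hja.eq_or_lt with rfl | hja
  · linarith
  set S := ∑ k ∈ Ioc j a, β ^ k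
  have hV := (sum_Ioc_le_of_forall_not_isCarrySite hβ he hq hja.le hno).1
  have hM : digitVal β (fun _ => m) (a + 1) = digitVal β (fun _ => m) (j + 1) + m * S := by
    rw [digitVal_add_sum_Ioc _ hja.le, mul_sum]
  have hS : β * S = ∑ k ∈ Ioc j a, β ^ (k + 1) := by
    rw [mul_sum]; exact sum_congr rfl fun k _ => by ring
  have hmS : ((q : ℝ) - 1) * (β * S) ≤ m * (β * S) := by
    have : ((q : ℝ) - 1) ≤ m := by
      rw [sub_le_iff_le_add]; exact_mod_cast (by omega : q ≤ m + 1)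
    exact mul_le_mul_of_nonneg_right this (by positivity)
  have hqS := sub_one_mul_sum_Ioc he hja.le
  rw [← hS] at hqS
  have haS : β ^ a ≤ S := single_le_sum (fun k _ => by positivity) (right_mem_Ioc.2 hja)
  have hβV : β * ∑ k ∈ Ioc j a, (c k : ℝ) * β ^ k ≤ β ^ (a + 2) - β ^ (j + 2) + β ^ (j + 1) :=
    calc _ ≤ β * (β ^ (a + 1) - β ^ (j + 1) + β ^ j) := mul_le_mul_of_nonneg_left hV hβ0.le
      _ = _ := by ring
  rw [digitVal_add_sum_Ioc _ hja.le, hM]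
  linarith

/-- The invariant kept by the carries: each prefix `c₀ ⋯ c_i` exceeds `m ⋯ m` by at most
`β^i - β^(i-1)`. -/
def Admissible (β : ℝ) (m : ℕ) (c : ℕ → ℕ) : Prop :=
  ∀ i, β * digitVal β c (i + 1) + β ^ i ≤ β * digitVal β (fun _ => m) (i + 1) + β ^ (i + 1)

lemma admissible_of_forall_le (hβ : 1 ≤ β) {c : ℕ → ℕ} (hc : ∀ k, c k ≤ m) :
    Admissible β m c := by
  intro i
  have hle : digitVal β c (i + 1) ≤ digitVal β (fun _ => m) (i + 1) :=
    sum_le_sum fun k _ => mul_le_mul_of_nonneg_right (by exact_mod_cast hc k) (by positivity)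
  have := mul_le_mul_of_nonneg_left hle (by linarith : (0 : ℝ) ≤ β)
  have := pow_le_pow_right₀ hβ (Nat.le_add_right i 1)
  linarith

lemma Admissible.le_of_forall_lt (hβ : 0 < β) {c : ℕ → ℕ} (hK : Admissible β m c) {j : ℕ}
    (hrun : ∀ k < j, c k = m) : c j ≤ m := by
  have h := hK j
  rw [digitVal_succ, digitVal_succ, digitVal_congr hrun, pow_succ] at h
  by_contra hc
  have hc' : (m : ℝ) + 1 ≤ c j := by exact_mod_cast (by omega : m + 1 ≤ c j)
  have := mul_le_mul_of_nonneg_right hc' (by positivity : (0 : ℝ) ≤ β ^ j * β)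
  have := pow_pos hβ j
  linarith

lemma Admissible.of_le (hβ : 0 ≤ β) {c c' : ℕ → ℕ} (hK : Admissible β m c) {a : ℕ}
    (hroom : β * digitVal β c (a + 1) + β ^ a ≤ β * digitVal β (fun _ => m) (a + 1))
    (ha : digitVal β c' (a + 1) ≤ digitVal β c (a + 1) + β ^ a)
    (hle : ∀ i ≠ a, digitVal β c' (i + 1) ≤ digitVal β c (i + 1)) : Admissible β m c' := by
  intro i
  rcases eq_or_ne i a with rfl | hi
  · have := mul_le_mul_of_nonneg_left ha hβ
    rw [pow_succ']
    linarith
  · have := mul_le_mul_of_nonneg_left (hle i hi) hβ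
    linarith [hK i]

def carry (c : ℕ → ℕ) (a b : ℕ) (d : ℕ → ℕ) (k : ℕ) : ℕ :=
  if k = a ∨ k = b + 1 then c k + 1 else if a < k ∧ k ≤ b then d k else c k

structure IsCarry (β : ℝ) (c : ℕ → ℕ) (a b : ℕ) (d : ℕ → ℕ) : Prop where
  lt : a < b
  le : ∀ k ∈ Ioc a b, d k ≤ c k
  lt_succ : d (a + 1) < c (a + 1)
  sum_mul_pow : ∑ k ∈ Ioc a b, (c k : ℝ) * β ^ k =
    ∑ k ∈ Ioc a b, (d k : ℝ) * β ^ k + β ^ a + β ^ (b + 1)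
  sum_add_two_lt : ∑ k ∈ Ioc a b, d k + 2 < ∑ k ∈ Ioc a b, c k

section carry

variable {c d : ℕ → ℕ} {a b : ℕ}

lemma carry_left : carry c a b d a = c a + 1 := if_pos (Or.inl rfl)

lemma carry_right : carry c a b d (b + 1) = c (b + 1) + 1 := if_pos (Or.inr rfl)

lemma carry_of_mem_Ioc {k : ℕ} (hk : k ∈ Ioc a b) : carry c a b d k = d k := by
  rw [mem_Ioc] at hk
  rw [carry, if_neg (by omega), if_pos (by omega)]

lemma carry_of_lt_or_lt (hab : a < b) {k : ℕ} (hk : k < a ∨ b + 1 < k) :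
    carry c a b d k = c k := by
  rw [carry, if_neg (by omega), if_neg (by omega)]

lemma sum_range_carry_add {M : Type*} [AddCommMonoid M] (g : ℕ → ℕ → M) (hab : a < b) {n : ℕ}
    (hn : b + 1 < n) :
    ∑ k ∈ range n, g k (carry c a b d k) +
        (g a (c a) + (∑ k ∈ Ioc a b, g k (c k) + g (b + 1) (c (b + 1)))) =
      ∑ k ∈ range n, g k (c k) +
        (g a (c a + 1) + (∑ k ∈ Ioc a b, g k (d k) + g (b + 1) (c (b + 1) + 1))) := by
  have hw := sum_add_sum_eq_of_eqOn_sdiff (f := fun k => g k (c k))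
    (g := fun k => g k (carry c a b d k)) (s := Icc a (b + 1)) (u := range n)
    (fun k hk => by simp only [mem_Icc, mem_range] at hk ⊢; omega)
    (fun k _ hk => by simp only [mem_Icc] at hk; rw [carry_of_lt_or_lt hab (by omega)])
  have hmid : ∑ k ∈ Ioc a b, g k (carry c a b d k) = ∑ k ∈ Ioc a b, g k (d k) :=
    sum_congr rfl fun k hk => by rw [carry_of_mem_Ioc hk]
  rwa [sum_Icc_add_one_right _ hab.le, sum_Icc_add_one_right _ hab.le, carry_left, carry_right,
    hmid] at hw

lemma IsCarry.digitVal_eq (h : IsCarry β c a b d) {n : ℕ} (hn : b + 1 < n) :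
    digitVal β (carry c a b d) n = digitVal β c n := by
  have hw := sum_range_carry_add (c := c) (d := d) (fun k v => (v : ℝ) * β ^ k) h.lt hn
  push_cast at hw
  unfold digitVal
  linarith [h.sum_mul_pow]

lemma IsCarry.sum_lt (h : IsCarry β c a b d) {n : ℕ} (hn : b + 1 < n) :
    ∑ k ∈ range n, carry c a b d k < ∑ k ∈ range n, c k := by
  have hw := sum_range_carry_add (c := c) (d := d) (fun _ v => v) h.lt hn
  have := h.sum_add_two_lt
  omega

lemma IsCarry.digitVal_le (hβ : 1 ≤ β) (h : IsCarry β c a b d) {i : ℕ} (hai : a < i)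
    (hib : i ≤ b) : digitVal β (carry c a b d) (i + 1) ≤ digitVal β c (i + 1) := by
  have hw := sum_add_sum_eq_of_eqOn_sdiff (f := fun k => (c k : ℝ) * β ^ k)
    (g := fun k => (carry c a b d k : ℝ) * β ^ k) (s := Icc a i) (u := range (i + 1))
    (fun k hk => by simp only [mem_Icc, mem_range] at hk ⊢; omega)
    (fun k hk hk' => by
      simp only [mem_Icc, mem_range] at hk hk'; rw [carry_of_lt_or_lt h.lt (by omega)])
  have hsplit (f : ℕ → ℝ) : ∑ k ∈ Icc a i, f k = f a + (f (a + 1) + ∑ k ∈ Ioc (a + 1) i, f k) := by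
    rw [Icc_eq_cons_Ioc hai.le, sum_cons, ← sum_Ioc_consecutive _ (Nat.le_succ a) hai,
      Nat.Ioc_succ_singleton, sum_singleton]
  have hmid : ∑ k ∈ Ioc (a + 1) i, (carry c a b d k : ℝ) * β ^ k ≤
      ∑ k ∈ Ioc (a + 1) i, (c k : ℝ) * β ^ k := by
    refine sum_le_sum fun k hk => ?_
    have hk' : k ∈ Ioc a b := by simp only [mem_Ioc] at hk ⊢; omega
    rw [carry_of_mem_Ioc hk']
    exact mul_le_mul_of_nonneg_right (by exact_mod_cast h.le k hk') (by positivity)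
  have hsucc : ((d (a + 1) : ℝ) + 1) * β ^ (a + 1) ≤ c (a + 1) * β ^ (a + 1) :=
    mul_le_mul_of_nonneg_right (by exact_mod_cast h.lt_succ) (by positivity)
  have hpow := pow_le_pow_right₀ hβ (Nat.le_add_right a 1)
  rw [hsplit, hsplit, carry_left, carry_of_mem_Ioc (by simp; omega)] at hw
  push_cast at hw
  unfold digitVal
  linarith

lemma IsCarry.admissible (hβ : 1 ≤ β) (h : IsCarry β c a b d) (hK : Admissible β m c)
    (hroom : β * digitVal β c (a + 1) + β ^ a ≤ β * digitVal β (fun _ => m) (a + 1)) :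
    Admissible β m (carry c a b d) := by
  refine hK.of_le (by linarith) hroom ?_ fun i hi => ?_
  · rw [digitVal_succ, digitVal_succ, carry_left,
      digitVal_congr fun k hk => carry_of_lt_or_lt h.lt (Or.inl hk)]
    push_cast
    linarith
  · rcases hi.lt_or_gt with hi | hi
    · exact (digitVal_congr fun k hk => carry_of_lt_or_lt h.lt (by omega)).le
    · rcases le_or_gt i b with hib | hib
      · exact h.digitVal_le hβ hi hib
      · exact (h.digitVal_eq (by omega)).le

end carry

lemma exists_isCarry (he : β ^ 2 = q * β - 1) (hq : 3 ≤ q) {c : ℕ → ℕ} {a : ℕ}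
    (h : IsCarrySite q c (a + 1)) : ∃ b d, IsCarry β c a b d := by
  rcases h with h | ⟨s, hs⟩
  · refine ⟨a + 1, fun k => c k - q, by omega, fun k _ => Nat.sub_le _ _, by omega, ?_, ?_⟩ <;>
      simp only [Nat.Ioc_succ_singleton, sum_singleton]
    · rw [Nat.cast_sub h]
      linear_combination -pow_add_two_add_pow he a
    · omega
  · obtain ⟨hbot, has, htop, -⟩ := id hs
    refine ⟨s, fun _ => 0, by omega, fun _ _ => Nat.zero_le _, by omega, ?_, ?_⟩
    · simp [sum_Ioc_of_isForbiddenFactor he (by omega) hs]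
    · have : c (a + 1) + c s ≤ ∑ k ∈ Ioc a s, c k := by
        rw [← sum_pair (by omega : a + 1 ≠ s)]
        refine sum_le_sum_of_subset fun k hk => ?_
        simp only [mem_insert, mem_singleton] at hk
        rw [mem_Ioc]
        omega
      simp only [sum_const_zero]
      omega

/-- The `s`-th letter of `(p-1)(p-2)(p-2)⋯`, the quasi-greedy expansion of `1` in base `β`. -/
def boundDigit (p : ℤ) (s : ℕ) : ℤ := if s = 0 then p - 1 else p - 2

lemma lex_of_forall_not_isCarrySite (hq : 2 ≤ q) {c : ℕ → ℕ} {j i : ℕ}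
    (hno : ∀ k, j < k → ¬IsCarrySite q c k) (hji : j < i) :
    (∀ s < i - j, (c (i - s) : ℤ) = boundDigit q s) ∨
      ∃ s < i - j, (∀ t < s, (c (i - t) : ℤ) = boundDigit q t) ∧
        (c (i - s) : ℤ) < boundDigit q s := by
  classical
  by_cases hall : ∀ s < i - j, (c (i - s) : ℤ) = boundDigit q s
  · exact Or.inl hall
  push Not at hall
  obtain ⟨s, ⟨hs, hne⟩, hmin⟩ : ∃ s, (s < i - j ∧ (c (i - s) : ℤ) ≠ boundDigit q s) ∧
      ∀ t < s, ¬(t < i - j ∧ (c (i - t) : ℤ) ≠ boundDigit q t) :=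
    ⟨_, Nat.find_spec hall, fun t => Nat.find_min hall⟩
  replace hmin : ∀ t < s, (c (i - t) : ℤ) = boundDigit q t := fun t ht => by
    by_contra h
    exact hmin t ht ⟨by omega, h⟩
  refine Or.inr ⟨s, hs, hmin, ?_⟩
  have hlt : c (i - s) < q := by
    by_contra h
    exact hno (i - s) (by omega) (Or.inl (by omega))
  unfold boundDigit at hne ⊢
  split_ifs at hne ⊢ with hs0
  · omega
  · suffices c (i - s) ≠ q - 1 by omega
    intro hbot
    refine hno (i - s) (by omega) (Or.inr ⟨i, hbot, by omega, ?_, fun t h₁ h₂ => ?_⟩)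
    · have := hmin 0 (by omega)
      simp only [boundDigit, if_pos, Nat.sub_zero] at this
      omega
    · have := hmin (i - t) (by omega)
      rw [boundDigit, if_neg (by omega), Nat.sub_sub_self (by omega)] at this
      omega

def IsNormalRep (β : ℝ) (p : ℤ) (m : ℕ) (y : ℝ) (n : ℕ) (r : ℕ → ℤ) : Prop :=
  y = ∑ k ∈ range n, (r k : ℝ) * β ^ k ∧
  (∀ k < n, 0 ≤ r k ∧ r k ≤ (m : ℤ)) ∧
  ∃ j ≤ n,
    (∀ k < j, r k = (m : ℤ)) ∧
    (j < n → r j ≤ (m : ℤ) - 1) ∧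
    (∀ k, j < k → k < n → r k ≤ p - 1) ∧
    (∀ i, j < i → i < n →
      (∀ s < i - j, r (i - s) = boundDigit p s) ∨
      ∃ s < i - j, (∀ t < s, r (i - t) = boundDigit p t) ∧ r (i - s) < boundDigit p s)

lemma isNormalRep_of_forall_not_isCarrySite (hq : 2 ≤ q) (hmq : q - 1 ≤ m) {c : ℕ → ℕ}
    {n j : ℕ} (hsupp : ∀ k, n ≤ k → c k = 0) (hrun : ∀ k < j, c k = m) (hcj : c j < m)
    (hno : ∀ k, j < k → ¬IsCarrySite q c k) :
    IsNormalRep β q m (digitVal β c n) n fun k => c k := by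
  have hdig : ∀ k, j < k → c k ≤ q - 1 := fun k hk => by
    by_contra h
    exact hno k hk (Or.inl (by omega))
  have hjn : j ≤ n := by
    by_contra h
    have := hrun n (by omega)
    have := hsupp n le_rfl
    omega
  refine ⟨by simp [digitVal], fun k _ => ⟨by positivity, ?_⟩, j, hjn,
    fun k hk => by simp [hrun k hk], fun _ => by dsimp only; omega, fun k hk _ => by dsimp only; have := hdig k hk; omega,
    fun i hi _ => lex_of_forall_not_isCarrySite hq hno hi⟩
  dsimp only
  rcases lt_trichotomy k j with h | rfl | h
  · simp [hrun k h]
  · omega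
  · have := hdig k h
    omega

theorem exists_carry_step (hβ : 1 < β) (hq : 3 ≤ q) (he : β ^ 2 = q * β - 1) (hmq : q - 1 ≤ m)
    {c : ℕ → ℕ} {n j : ℕ} (hsupp : ∀ k, n ≤ k → c k = 0) (hK : Admissible β m c)
    (hrun : ∀ k < j, c k = m) (hcj : c j < m) (hsite : ∃ x, j < x ∧ IsCarrySite q c x) :
    ∃ c' n', (∀ k, n' ≤ k → c' k = 0) ∧ ∑ k ∈ range n', c' k < ∑ k ∈ range n, c k ∧
      digitVal β c' n' = digitVal β c n ∧ Admissible β m c' := by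
  classical
  obtain ⟨x, ⟨hjx, hx⟩, hmin⟩ : ∃ x, (j < x ∧ IsCarrySite q c x) ∧
      ∀ k < x, ¬(j < k ∧ IsCarrySite q c k) :=
    ⟨_, Nat.find_spec hsite, fun k => Nat.find_min hsite⟩
  obtain ⟨a, rfl⟩ : ∃ a, x = a + 1 := ⟨x - 1, by omega⟩
  have hroom := room_of_forall_not_isCarrySite hβ he (by omega) hmq hrun hcj (a := a) (by omega)
    fun k hjk hka hs => hmin k (by omega) ⟨hjk, hs⟩
  obtain ⟨b, d, h⟩ := exists_isCarry he hq hx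
  refine ⟨carry c a b d, max n (b + 2), fun k hk => ?_, ?_, ?_, h.admissible hβ.le hK hroom⟩
  · rw [carry_of_lt_or_lt h.lt (by omega)]
    exact hsupp k (by omega)
  · rw [← sum_range_eq_of_le (le_max_left n (b + 2)) hsupp]
    exact h.sum_lt (by omega)
  · rw [h.digitVal_eq (by omega)]
    exact sum_range_eq_of_le (le_max_left _ _) fun k hk => by simp [hsupp k hk]

theorem exists_isNormalRep (hβ : 1 < β) (hq : 3 ≤ q) (he : β ^ 2 = q * β - 1) (hmq : q - 1 ≤ m)
    {c : ℕ → ℕ} {n : ℕ} (hsupp : ∀ k, n ≤ k → c k = 0) (hK : Admissible β m c) :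
    ∃ n' r, IsNormalRep β q m (digitVal β c n) n' r := by
  induction h : ∑ k ∈ range n, c k using Nat.strong_induction_on generalizing c n with
  | _ N ih =>
  classical
  have hex : ∃ k, c k ≠ m := ⟨n, by rw [hsupp n le_rfl]; omega⟩
  have hrun : ∀ k < Nat.find hex, c k = m := fun k hk => not_not.1 (Nat.find_min hex hk)
  have hcj := (hK.le_of_forall_lt (by linarith) hrun).lt_of_ne (Nat.find_spec hex)
  by_cases hsite : ∃ x, Nat.find hex < x ∧ IsCarrySite q c x
  · obtain ⟨c', n', hsupp', hlt, hval, hK'⟩ :=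
      exists_carry_step hβ hq he hmq hsupp hK hrun hcj hsite
    rw [← hval]
    exact ih _ (h ▸ hlt) hsupp' hK' rfl
  · push Not at hsite
    exact ⟨n, _, isNormalRep_of_forall_not_isCarrySite (by omega) hmq hsupp hrun hcj hsite⟩

lemma floor_eq (hβ : 1 < β) (he : β ^ 2 = q * β - 1) : ⌊β⌋ = (q : ℤ) - 1 := by
  rw [Int.floor_eq_iff]
  push_cast
  constructor <;> linarith [natCast_sub_one_lt hβ he, lt_natCast hβ he]

end BetaExpansion

open BetaExpansion in
/-- Lemma (case `β² = pβ - 1`, `p ≥ 3`, `m ≥ ⌊β⌋ = p - 1`): every `y ∈ X^m(β)` has a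
representation `y = ∑_{k<n} r_k β^k` of the form `u c m^j` where `c ∈ {0,…,m-1}`,
`u` has digits in `{0,…,p-1}`, and every suffix of `u` (read most-significant-first) is
lexicographically strictly smaller than `(p-1)(p-2)(p-2)⋯`. -/
theorem spectrum_representation_minus_case (β : ℝ) (p : ℤ)
    (hβ : 1 < β) (hp : 3 ≤ p) (heq : β ^ 2 = p * β - 1)
    (m : ℕ) (hm : ⌊β⌋ ≤ (m : ℤ)) :
    ∀ y ∈ Xspec β m, ∃ (n : ℕ) (r : ℕ → ℤ),
      y = ∑ k ∈ Finset.range n, (r k : ℝ) * β ^ k ∧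
      (∀ k < n, 0 ≤ r k ∧ r k ≤ (m : ℤ)) ∧
      ∃ j ≤ n,
        (∀ k < j, r k = (m : ℤ)) ∧
        (j < n → r j ≤ (m : ℤ) - 1) ∧
        (∀ k, j < k → k < n → r k ≤ p - 1) ∧
        (∀ i, j < i → i < n →
          (∀ s < i - j, r (i - s) = (if s = 0 then p - 1 else p - 2)) ∨
          (∃ s < i - j, (∀ t < s, r (i - t) = (if t = 0 then p - 1 else p - 2)) ∧
            r (i - s) < (if s = 0 then p - 1 else p - 2))) := by
  rintro y ⟨n, c, hc, rfl⟩
  lift p to ℕ using (by omega)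
  have he : β ^ 2 = (p : ℝ) * β - 1 := by exact_mod_cast heq
  have hmq : p - 1 ≤ m := by
    rw [floor_eq hβ he] at hm
    omega
  let c' : ℕ → ℕ := fun k => if k ≤ n then c k else 0
  have hy : ∑ j ∈ Finset.range (n + 1), (c j : ℝ) * β ^ j = digitVal β c' (n + 1) :=
    digitVal_congr fun k hk => (if_pos (by omega)).symm
  have hK : Admissible β m c' := admissible_of_forall_le hβ.le fun k => by
    by_cases hk : k ≤ n
    · simpa [c', hk] using hc k hk
    · simp [c', hk]
  rw [hy]
  exact exists_isNormalRep hβ (by omega) he hmq (fun k hk => if_neg (by omega)) hK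
end

section
/- Let β > 1 be the root of x² − px + 1 with integer p ≥ 3, let m ∈ ℕ with m ≥ ⌊β⌋ = p − 1, and for k ≥ 1 set y_k = −β^k + m ∑_{i=0}^{k−1} β^i. Then y_k ∈ Σ_β(Ω) with Ω = [ 0, mβ/(β − 1) ), but y_k ∉ X^m(β). -/
/-!
Write `y_k = Y(β)` for the integer polynomial `Y = -X^k + m ∑_{i<k} X^i`. Since `β` is an
irrational root of `X² - pX + 1`, whose other root is `β' = β⁻¹`, every integer polynomial
is `a + bX` modulo `X² - pX + 1`; so `y_k = a + bβ` has conjugate `Y(β⁻¹)`, which a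
geometric-series bound places in `[0, mβ/(β-1))`.

If `y_k = P(β)` with the coefficients of `P` in `{0,…,m}`, then `Q = P - Y` vanishes at `β`,
hence at `β⁻¹`. Its coefficients are `≤ 0` below `k` and `≥ 0` from `k` on, with `Q_k ≥ 1`.
But `Q(β) - β^(2k-1) Q(β⁻¹) = ∑ Q_j (β^j - β^(2k-1-j))` is a sum of nonnegative terms whose
second factors never vanish, which forces `Q = 0`.
-/

open Polynomial Finset

theorem exists_aeval_eq_add_mul {S : Type*} [CommRing S] {f : ℤ[X]} (hf : f.Monic)
    (hf2 : f.natDegree = 2) (P : ℤ[X]) :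
    ∃ a b : ℤ, ∀ γ : S, aeval γ f = 0 → aeval γ P = a + b * γ := by
  have hR : (P %ₘ f).natDegree ≤ 1 := by
    have := natDegree_modByMonic_lt P hf (by rintro rfl; simp at hf2)
    omega
  refine ⟨(P %ₘ f).coeff 0, (P %ₘ f).coeff 1, fun γ hγ => ?_⟩
  have hlin := congrArg (aeval γ) (eq_X_add_C_of_natDegree_le_one hR)
  rw [map_add, map_mul, aeval_C, aeval_C, aeval_X, algebraMap_int_eq, eq_intCast,
    eq_intCast] at hlin
  rw [← aeval_modByMonic_eq_self_of_root hγ, hlin, add_comm, mul_comm]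

theorem aeval_eq_zero_of_irrational_root {f : ℤ[X]} (hf : f.Monic)
    (hf2 : f.natDegree = 2) {β γ : ℝ} (hirr : Irrational β) (hβ : aeval β f = 0)
    (hγ : aeval γ f = 0) {P : ℤ[X]} (hP : aeval β P = 0) : aeval γ P = 0 := by
  obtain ⟨a, b, hab⟩ := exists_aeval_eq_add_mul (S := ℝ) hf hf2 P
  have hb : b = 0 := by
    by_contra hb
    refine hirr.ne_rat (-a / b) ?_
    have : (b : ℝ) ≠ 0 := by exact_mod_cast hb
    push_cast
    field_simp
    linarith [hab β hβ]
  have ha : a = 0 := by simpa [hb] using (hab β hβ).symm.trans hP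
  simp [hab γ hγ, ha, hb]

theorem eq_zero_of_coeff_sign_of_aeval_eq_zero {β : ℝ} (hβ : 1 < β) {Q : ℤ[X]} (k : ℕ)
    (hlt : ∀ j < k, Q.coeff j ≤ 0) (hge : ∀ j, k ≤ j → 0 ≤ Q.coeff j)
    (h : aeval β Q = 0) (h' : aeval β⁻¹ Q = 0) : Q = 0 := by
  have hβ0 : β ≠ 0 := by positivity
  set d : ℕ → ℝ := fun j => β ^ (j : ℤ) - β ^ (2 * k - 1 - j : ℤ)
  -- `d j` has the sign of `j - k + 1/2`, so every term `Q.coeff j * d j` is nonnegative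
  have hterm : ∀ j, 0 ≤ (Q.coeff j : ℝ) * d j ∧ d j ≠ 0 := by
    intro j
    rcases lt_or_ge j k with hj | hj
    · have hd : d j < 0 := sub_neg.2 (zpow_lt_zpow_right₀ hβ (by omega))
      exact ⟨mul_nonneg_of_nonpos_of_nonpos (by exact_mod_cast hlt j hj) hd.le, hd.ne⟩
    · have hd : 0 < d j := sub_pos.2 (zpow_lt_zpow_right₀ hβ (by omega))
      exact ⟨mul_nonneg (by exact_mod_cast hge j hj) hd.le, hd.ne'⟩
  have hsum : ∑ j ∈ range (Q.natDegree + 1), (Q.coeff j : ℝ) * d j = 0 := by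
    have := congrArg₂ (fun u v => u - β ^ (2 * k - 1 : ℤ) * v) h h'
    simp only [aeval_eq_sum_range, zsmul_eq_mul, mul_sum, ← sum_sub_distrib, mul_zero,
      sub_zero] at this
    rw [← this]
    refine sum_congr rfl fun j _ => ?_
    have hinv : β⁻¹ ^ j = β ^ (-(j : ℤ)) := by rw [zpow_neg, zpow_natCast, inv_pow]
    simp only [d, hinv, sub_eq_add_neg (2 * (k : ℤ) - 1), zpow_add₀ hβ0, zpow_natCast]
    ring
  ext j
  by_cases hj : j < Q.natDegree + 1
  · have := (sum_eq_zero_iff_of_nonneg fun i _ => (hterm i).1).1 hsum j (mem_range.2 hj)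
    exact_mod_cast (mul_eq_zero.1 this).resolve_right (hterm j).2
  · exact coeff_eq_zero_of_natDegree_lt (by omega)

theorem neg_pow_add_mul_geom_sum_mem_Ico {x m : ℝ} (hx0 : 0 < x) (hx1 : x < 1) (hm : 1 ≤ m)
    {k : ℕ} (hk : 1 ≤ k) :
    -x ^ k + m * ∑ i ∈ range k, x ^ i ∈ Set.Ico 0 (m / (1 - x)) := by
  have hgeom_ge : 1 ≤ ∑ i ∈ range k, x ^ i := by
    simpa using single_le_sum (f := (x ^ ·)) (fun i _ => (pow_pos hx0 i).le) (mem_range.2 hk)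
  have hgeom_le : ∑ i ∈ range k, x ^ i ≤ 1 / (1 - x) := by
    have := geom_sum_Ico_le_of_lt_one (m := 0) (n := k) hx0.le hx1
    rwa [← range_eq_Ico, pow_zero] at this
  constructor
  · nlinarith [pow_le_one₀ hx0.le hx1.le (n := k)]
  · calc -x ^ k + m * ∑ i ∈ range k, x ^ i < m * (1 / (1 - x)) := by
          nlinarith [mul_le_mul_of_nonneg_left hgeom_le (by linarith : (0 : ℝ) ≤ m),
            pow_pos hx0 k]
      _ = m / (1 - x) := by ring

section QuadraticUnit

variable {p : ℤ} {β : ℝ}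

theorem aeval_X_sq_sub_C_mul_X_add_one_eq_zero {S : Type*} [CommRing S] {γ : S}
    (hγ : γ ^ 2 = p * γ - 1) : aeval γ (X ^ 2 - C p * X + 1 : ℤ[X]) = 0 := by
  simp only [map_add, map_sub, map_mul, map_pow, aeval_X, eq_intCast, map_intCast, map_one]
  linear_combination hγ

theorem monic_X_sq_sub_C_mul_X_add_one : (X ^ 2 - C p * X + 1 : ℤ[X]).Monic := by
  monicity!

theorem natDegree_X_sq_sub_C_mul_X_add_one : (X ^ 2 - C p * X + 1 : ℤ[X]).natDegree = 2 := by
  compute_degree!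

theorem inv_eq_sub_of_sq_eq (hβ : β ^ 2 = p * β - 1) : β⁻¹ = p - β := by
  have hβ0 : β ≠ 0 := by rintro rfl; norm_num at hβ
  field_simp
  linear_combination hβ

theorem sq_inv_eq_of_sq_eq (hβ : β ^ 2 = p * β - 1) : β⁻¹ ^ 2 = p * β⁻¹ - 1 := by
  rw [inv_eq_sub_of_sq_eq hβ]
  linear_combination hβ

theorem irrational_of_sq_eq (h1 : 1 < β) (hβ : β ^ 2 = p * β - 1) : Irrational β := by
  rintro ⟨q, rfl⟩
  have hq : q ^ 2 = p * q - 1 := by exact_mod_cast hβ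
  obtain ⟨n, rfl⟩ := isInteger_of_is_root_of_monic monic_X_sq_sub_C_mul_X_add_one
    (aeval_X_sq_sub_C_mul_X_add_one_eq_zero hq)
  simp only [algebraMap_int_eq, eq_intCast, Rat.cast_intCast] at h1 hβ
  -- `0 < β⁻¹ = p - β < 1`, so `β` lies strictly between the integers `p - 1` and `p`
  have hinv := inv_eq_sub_of_sq_eq hβ
  have hpos : (0 : ℝ) < p - n := hinv ▸ by positivity
  have hlt : (p : ℝ) - n < 1 := hinv ▸ inv_lt_one_of_one_lt₀ h1
  have : (0 : ℤ) < p - n := by exact_mod_cast hpos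
  have : p - n < (1 : ℤ) := by exact_mod_cast hlt
  omega

end QuadraticUnit

noncomputable def yPoly (m k : ℕ) : ℤ[X] := -X ^ k + (m : ℤ[X]) * ∑ i ∈ range k, X ^ i

theorem aeval_yPoly (β : ℝ) (m k : ℕ) :
    aeval β (yPoly m k) = -β ^ k + (m : ℝ) * ∑ i ∈ range k, β ^ i := by
  simp [yPoly]

theorem coeff_yPoly (m k j : ℕ) :
    (yPoly m k).coeff j = if j < k then (m : ℤ) else if j = k then -1 else 0 := by
  simp only [yPoly, coeff_add, coeff_neg, coeff_X_pow, ← C_eq_natCast, coeff_C_mul,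
    finsetSum_coeff, sum_ite_eq, mem_range]
  split_ifs <;> omega

theorem exists_poly_of_mem_Xspec {β x : ℝ} {m : ℕ} (hx : x ∈ Xspec β m) :
    ∃ P : ℤ[X], (∀ j, 0 ≤ P.coeff j ∧ P.coeff j ≤ m) ∧ x = aeval β P := by
  obtain ⟨n, c, hc, rfl⟩ := hx
  refine ⟨∑ j ∈ range (n + 1), C (c j : ℤ) * X ^ j, fun j => ?_, by simp⟩
  simp only [finsetSum_coeff, coeff_C_mul_X_pow, sum_ite_eq, mem_range]
  split_ifs with hj
  · exact ⟨by positivity, by exact_mod_cast hc j (by omega)⟩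
  · simp

theorem aeval_yPoly_not_mem_Xspec {p : ℤ} {β : ℝ} (h1 : 1 < β) (hβ : β ^ 2 = p * β - 1)
    (m k : ℕ) : aeval β (yPoly m k) ∉ Xspec β m := by
  intro hmem
  obtain ⟨P, hP, hPβ⟩ := exists_poly_of_mem_Xspec hmem
  have hQβ : aeval β (P - yPoly m k) = 0 := by rw [map_sub, ← hPβ, sub_self]
  have hQβ' : aeval β⁻¹ (P - yPoly m k) = 0 :=
    aeval_eq_zero_of_irrational_root monic_X_sq_sub_C_mul_X_add_one
      natDegree_X_sq_sub_C_mul_X_add_one (irrational_of_sq_eq h1 hβ)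
      (aeval_X_sq_sub_C_mul_X_add_one_eq_zero hβ)
      (aeval_X_sq_sub_C_mul_X_add_one_eq_zero (sq_inv_eq_of_sq_eq hβ)) hQβ
  have hQ : P - yPoly m k = 0 := by
    refine eq_zero_of_coeff_sign_of_aeval_eq_zero h1 k (fun j hj => ?_) (fun j hj => ?_)
      hQβ hQβ'
    · simp only [coeff_sub, coeff_yPoly, if_pos hj]
      linarith [hP j]
    · simp only [coeff_sub, coeff_yPoly, if_neg (not_lt.2 hj)]
      split_ifs <;> linarith [hP j]
  have hk := congrArg (coeff · k) hQ
  simp only [coeff_sub, coeff_yPoly, lt_irrefl, if_false, if_true, coeff_zero] at hk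
  linarith [hP k]

theorem cutProject_point_not_in_spectrum_minus_general (β : ℝ) (p : ℤ)
    (hβ : 1 < β) (heq : β ^ 2 = p * β - 1)
    (m : ℕ) (hm : ⌊β⌋ ≤ (m : ℤ)) (k : ℕ) (hk : 1 ≤ k) :
    (-β ^ k + (m : ℝ) * ∑ i ∈ Finset.range k, β ^ i) ∈
        sigmaCP β ((p : ℝ) - β) (Set.Ico (0 : ℝ) ((m : ℝ) * β / (β - 1))) ∧
    (-β ^ k + (m : ℝ) * ∑ i ∈ Finset.range k, β ^ i) ∉ Xspec β m := by
  have hm1 : (1 : ℝ) ≤ m := by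
    have : (1 : ℤ) ≤ ⌊β⌋ := Int.le_floor.2 (by exact_mod_cast hβ.le)
    exact_mod_cast this.trans hm
  rw [← aeval_yPoly]
  refine ⟨?_, aeval_yPoly_not_mem_Xspec hβ heq m k⟩
  obtain ⟨a, b, hab⟩ := exists_aeval_eq_add_mul (S := ℝ) monic_X_sq_sub_C_mul_X_add_one
    natDegree_X_sq_sub_C_mul_X_add_one (yPoly m k)
  refine ⟨a, b, hab β (aeval_X_sq_sub_C_mul_X_add_one_eq_zero heq), ?_⟩
  rw [← inv_eq_sub_of_sq_eq heq,
    ← hab _ (aeval_X_sq_sub_C_mul_X_add_one_eq_zero (sq_inv_eq_of_sq_eq heq)), aeval_yPoly]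
  have hbounds := neg_pow_add_mul_geom_sum_mem_Ico (inv_pos.2 (by linarith))
    (inv_lt_one_of_one_lt₀ hβ) hm1 hk
  rwa [show (m : ℝ) / (1 - β⁻¹) = m * β / (β - 1) by field_simp] at hbounds

/-- Corollary (case `β² = pβ - 1`, `p ≥ 3`, `m ≥ ⌊β⌋`): for `k ≥ 1`, the numbers
`y_k = -β^k + m ∑_{i<k} β^i` lie in `Σ_β([0, mβ/(β-1)))` but not in `X^m(β)`. -/
theorem cutProject_point_not_in_spectrum_minus (β : ℝ) (p : ℤ)
    (hβ : 1 < β) (hp : 3 ≤ p) (heq : β ^ 2 = p * β - 1)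
    (m : ℕ) (hm : ⌊β⌋ ≤ (m : ℤ)) (k : ℕ) (hk : 1 ≤ k) :
    (-β ^ k + (m : ℝ) * ∑ i ∈ Finset.range k, β ^ i) ∈
        sigmaCP β ((p : ℝ) - β) (Set.Ico (0 : ℝ) ((m : ℝ) * β / (β - 1))) ∧
    (-β ^ k + (m : ℝ) * ∑ i ∈ Finset.range k, β ^ i) ∉ Xspec β m :=
  cutProject_point_not_in_spectrum_minus_general β p hβ heq m hm k hk
end

section
/- Let β > 1 be the root of x² − px − 1 with integer p ≥ 1, and let m ∈ ℕ with m ≥ ⌊β⌋ = p. Then every y ∈ X^m(β) can be written as y = ∑_{k=0}^{n−1} r_k β^k with digits r_k ∈ {0,1,…,m} such that the digit string r_{n−1} ⋯ r₁ r₀ (most significant digit first) decomposes as a concatenation u w v where: v is a (possibly empty) prefix of the infinite periodic word m 0 m 0 m 0 ⋯; w is either empty or a two-letter word c d with c, d ∈ {0,1,…,m−1} and, if d ≥ 1, then c ≤ p − 1; and u is a (possibly empty) word over the alphabet {0,1,…,p}. -/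
/-!
Encode digit strings as integer polynomials, so that the value is `aeval β` and, since
`β² = pβ + 1`, adding any multiple of `X² - pX - 1` keeps the value. Among the strings with
digits in `{0,…,m}` in the class of `y`, take one of least weight `∑ (i + 2) aᵢ`. The rewrites
`(a, b, c) ↦ (a + 1, b - p, c - 1)` (adding `Xᵏ (X² - pX - 1)`) and
`(a, b, 0, d) ↦ (a + 1, b - p - 1, p - 1, d + 1)` (adding `Xʲ (X - 1)(X² - pX - 1)`) both lower
the weight, so neither applies to a minimal string. Hence every digit `≥ p` has a `0` just below
it, and a digit `> p` forces the digit two places below to be `m`. Below the highest digit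
exceeding `p` this propagates into the periodic tail `m 0 m 0 ⋯`, leaving at most a two-letter
block between it and the digits `≤ p` above.
-/

open Polynomial

def IsDigitPoly (m : ℤ) (f : ℤ[X]) : Prop := ∀ i, 0 ≤ f.coeff i ∧ f.coeff i ≤ m

-- `∑ (i + 2) aᵢ` for `f = ∑ aᵢ Xⁱ`.
noncomputable def digitWeight : ℤ[X] →+ ℤ :=
  AddMonoidHom.mk' (fun f => (derivative f).eval 1 + 2 * f.eval 1) fun f g => by
    simp only [derivative_add, eval_add]
    ring

theorem digitWeight_apply (f : ℤ[X]) :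
    digitWeight f = (derivative f).eval 1 + 2 * f.eval 1 := rfl

theorem digitWeight_C_mul_X_pow (a : ℤ) (n : ℕ) : digitWeight (C a * X ^ n) = a * (n + 2) := by
  rw [digitWeight_apply, derivative_C_mul_X_pow]
  simp only [eval_mul, eval_C, eval_pow, eval_X, one_pow, mul_one]
  ring

theorem digitWeight_X_pow (n : ℕ) : digitWeight (X ^ n) = n + 2 := by
  simpa using digitWeight_C_mul_X_pow 1 n

theorem digitWeight_nonneg {f : ℤ[X]} (hf : ∀ i, 0 ≤ f.coeff i) : 0 ≤ digitWeight f := by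
  have h₁ : 0 ≤ (derivative f).eval 1 := by
    rw [derivative_eval, Polynomial.sum_def]
    exact Finset.sum_nonneg fun n _ => by have := hf n; positivity
  have h₂ : 0 ≤ f.eval 1 := by
    rw [eval_eq_sum, Polynomial.sum_def]
    exact Finset.sum_nonneg fun n _ => by have := hf n; positivity
  rw [digitWeight_apply]
  positivity

def IsReducedDigitPoly (p m : ℤ) (f : ℤ[X]) : Prop :=
  IsDigitPoly m f ∧
    ∀ g, IsDigitPoly m g → X ^ 2 - C p * X - 1 ∣ g - f → digitWeight f ≤ digitWeight g

theorem exists_isReducedDigitPoly {p m : ℤ} {f : ℤ[X]} (hf : IsDigitPoly m f) :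
    ∃ g, IsReducedDigitPoly p m g ∧ X ^ 2 - C p * X - 1 ∣ g - f := by
  obtain ⟨g, ⟨hg, hgf⟩, hmin⟩ := (measure fun g => (digitWeight g).toNat).wf.has_min
    {g | IsDigitPoly m g ∧ X ^ 2 - C p * X - 1 ∣ g - f} ⟨f, hf, by simp⟩
  refine ⟨g, ⟨hg, fun h hh hhg => ?_⟩, hgf⟩
  have hlt := hmin h ⟨hh, by simpa using dvd_add hhg hgf⟩
  have := digitWeight_nonneg fun i => (hg i).1
  have := digitWeight_nonneg fun i => (hh i).1
  change ¬(digitWeight h).toNat < (digitWeight g).toNat at hlt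
  omega

-- The string `r (n - 1) ⋯ r 0` is `u w v` with `|v| = lv` and `|w| = lw`.
def HasUWVDecomposition (p m : ℤ) (r : ℕ → ℤ) (n : ℕ) : Prop :=
  ∃ lv lw : ℕ, (lw = 0 ∨ lw = 2) ∧ lv + lw ≤ n ∧
    (∀ s < lv, r (lv - 1 - s) = if s % 2 = 0 then m else 0) ∧
    (lw = 2 →
      0 ≤ r (lv + 1) ∧ r (lv + 1) ≤ m - 1 ∧
      0 ≤ r lv ∧ r lv ≤ m - 1 ∧
      (1 ≤ r lv → r (lv + 1) ≤ p - 1)) ∧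
    (∀ k, lv + lw ≤ k → k < n → 0 ≤ r k ∧ r k ≤ p)

theorem exists_greatest_coeff_gt {f : ℤ[X]} {p : ℤ} (hp : 0 ≤ p) (h : ∃ j, p < f.coeff j) :
    ∃ i, p < f.coeff i ∧ ∀ k, i < k → f.coeff k ≤ p := by
  obtain ⟨j, hj⟩ := h
  have hjdeg : j ≤ f.natDegree := le_natDegree_of_ne_zero (by omega)
  refine ⟨Nat.findGreatest (fun k => p < f.coeff k) f.natDegree,
    Nat.findGreatest_spec (P := fun k => p < f.coeff k) hjdeg hj, fun k hk => ?_⟩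
  by_cases hkdeg : k ≤ f.natDegree
  · exact not_lt.mp (Nat.findGreatest_is_greatest hk hkdeg)
  · rw [coeff_eq_zero_of_natDegree_lt (by omega)]
    exact hp

namespace IsReducedDigitPoly

variable {p m : ℤ} {f : ℤ[X]}

theorem coeff_add_two_eq (hf : IsReducedDigitPoly p m f) (hp : 1 ≤ p) {k : ℕ}
    (hk₁ : p ≤ f.coeff (k + 1)) (hk : 1 ≤ f.coeff k) : f.coeff (k + 2) = m := by
  by_contra hne
  set g := f + X ^ (k + 2) - C p * X ^ (k + 1) - X ^ k
  have hg : IsDigitPoly m g := by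
    intro i
    have hcoeff : g.coeff i = f.coeff i + (if i = k + 2 then 1 else 0)
        - (if i = k + 1 then p else 0) - (if i = k then 1 else 0) := by
      simp only [g, coeff_add, coeff_sub, coeff_X_pow, coeff_C_mul_X_pow]
    have := hf.1 i
    have := hf.1 (k + 2)
    rw [hcoeff]
    split_ifs <;> subst_vars <;> omega
  have hw : digitWeight g = digitWeight f + 2 - p * (k + 3) := by
    simp only [g, digitWeight.map_add, digitWeight.map_sub, digitWeight_X_pow,
      digitWeight_C_mul_X_pow]
    push_cast
    ring
  have := hf.2 g hg ⟨X ^ k, by simp only [g]; ring⟩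
  nlinarith

theorem coeff_eq_zero_of_le_coeff_succ (hf : IsReducedDigitPoly p m f) (hp : 1 ≤ p) (hpm : p ≤ m)
    {k : ℕ} (hk : p ≤ f.coeff (k + 1)) : f.coeff k = 0 := by
  by_contra hne
  -- by `coeff_add_two_eq`, a digit `≥ p` over a nonzero digit recurs one place higher, forever
  have hup : ∀ i, p ≤ f.coeff (k + i + 1) ∧ 1 ≤ f.coeff (k + i) := by
    intro i
    induction i with
    | zero => exact ⟨hk, by have := (hf.1 k).1; rw [add_zero]; omega⟩
    | succ i ih =>
      rw [← add_assoc, hf.coeff_add_two_eq hp ih.1 ih.2]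
      exact ⟨hpm, hp.trans ih.1⟩
  have := (hup f.natDegree).1
  rw [coeff_eq_zero_of_natDegree_lt (by omega)] at this
  omega

theorem coeff_eq_of_lt_coeff_add_two (hf : IsReducedDigitPoly p m f) (hp : 1 ≤ p) (hpm : p ≤ m)
    {j : ℕ} (hj : p < f.coeff (j + 2)) : f.coeff j = m := by
  by_contra hne
  have h₁ : f.coeff (j + 1) = 0 := hf.coeff_eq_zero_of_le_coeff_succ hp hpm hj.le
  have h₃ : f.coeff (j + 3) ≠ m := fun h₃ => by
    have := hf.coeff_eq_zero_of_le_coeff_succ hp hpm (k := j + 2) (h₃ ▸ hpm)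
    omega
  set g := f + X ^ (j + 3) - C (p + 1) * X ^ (j + 2) + C (p - 1) * X ^ (j + 1) + X ^ j
  have hg : IsDigitPoly m g := by
    intro i
    have hcoeff : g.coeff i = f.coeff i + (if i = j + 3 then 1 else 0)
        - (if i = j + 2 then p + 1 else 0) + (if i = j + 1 then p - 1 else 0)
        + (if i = j then 1 else 0) := by
      simp only [g, coeff_add, coeff_sub, coeff_X_pow, coeff_C_mul_X_pow]
    have := hf.1 i
    have := hf.1 j
    have := hf.1 (j + 2)
    have := hf.1 (j + 3)
    rw [hcoeff]
    split_ifs <;> subst_vars <;> omega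
  have hw : digitWeight g = digitWeight f - p := by
    simp only [g, digitWeight.map_add, digitWeight.map_sub, digitWeight_X_pow,
      digitWeight_C_mul_X_pow]
    push_cast
    ring
  have := hf.2 g hg ⟨X ^ j * (X - 1), by simp only [g, map_add, map_sub, map_one]; ring⟩
  omega

theorem coeff_sub_eq_ite_of_coeff_eq (hf : IsReducedDigitPoly p m f) (hp : 1 ≤ p) (hpm : p < m)
    {b : ℕ} (hb : f.coeff b = m) (s : ℕ) (hs : s ≤ b) :
    f.coeff (b - s) = if s % 2 = 0 then m else 0 := by
  induction s using Nat.strong_induction_on with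
  | _ s ih =>
    match s, ih with
    | 0, _ => simpa using hb
    | 1, _ =>
      simpa using hf.coeff_eq_zero_of_le_coeff_succ hp hpm.le (k := b - 1)
        (by rw [show b - 1 + 1 = b by omega, hb]; exact hpm.le)
    | t + 2, ih =>
      rcases Nat.even_or_odd t with ht | ht
      · have hm := ih t (by omega) (by omega)
        rw [if_pos (by rw [Nat.even_iff] at ht; exact ht)] at hm
        rw [if_pos (by rw [Nat.even_iff] at ht; omega)]
        exact hf.coeff_eq_of_lt_coeff_add_two hp hpm.le
          (by rw [show b - (t + 2) + 2 = b - t by omega, hm]; exact hpm)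
      · have hm := ih (t + 1) (by omega) (by omega)
        rw [if_pos (by rw [Nat.odd_iff] at ht; omega)] at hm
        rw [if_neg (by rw [Nat.odd_iff] at ht; omega)]
        exact hf.coeff_eq_zero_of_le_coeff_succ hp hpm.le
          (by rw [show b - (t + 2) + 1 = b - (t + 1) by omega, hm]; exact hpm.le)

theorem hasUWVDecomposition_of_lt (hf : IsReducedDigitPoly p m f) (hp : 1 ≤ p) (hpm : p ≤ m)
    {lv n : ℕ} (hn : lv + 2 ≤ n)
    (hv : ∀ s < lv, f.coeff (lv - 1 - s) = if s % 2 = 0 then m else 0)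
    (hw₁ : f.coeff (lv + 1) < m) (hw₀ : f.coeff lv < m) (hu : ∀ k, lv + 2 ≤ k → f.coeff k ≤ p) :
    HasUWVDecomposition p m f.coeff n := by
  refine ⟨lv, 2, Or.inr rfl, hn, hv, fun _ => ⟨(hf.1 _).1, by omega, (hf.1 _).1, by omega, ?_⟩,
    fun k hk _ => ⟨(hf.1 k).1, hu k hk⟩⟩
  intro h₀
  by_contra! h₁
  have := hf.coeff_eq_zero_of_le_coeff_succ hp hpm (k := lv) (by omega)
  omega

theorem hasUWVDecomposition (hf : IsReducedDigitPoly p m f) (hp : 1 ≤ p) (hpm : p ≤ m) :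
    HasUWVDecomposition p m f.coeff (f.natDegree + 3) := by
  by_cases hsmall : ∀ k, f.coeff k ≤ p
  · exact ⟨0, 0, Or.inl rfl, by omega, by simp, by simp, fun k _ _ => ⟨(hf.1 k).1, hsmall k⟩⟩
  push Not at hsmall
  obtain ⟨h, hh, habove⟩ := exists_greatest_coeff_gt (by omega) hsmall
  have hhdeg : h ≤ f.natDegree := le_natDegree_of_ne_zero (by omega)
  have hpm' : p < m := hh.trans_le (hf.1 h).2
  rcases (hf.1 h).2.lt_or_eq with htop | htop
  · rcases lt_or_ge h 2 with hh2 | hh2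
    · refine hf.hasUWVDecomposition_of_lt hp hpm (lv := 0) (by omega) (by simp) ?_ ?_
        (fun k hk => habove k (by omega))
      · show f.coeff 1 < m
        rcases lt_or_ge h 1 with h0 | h1
        · have := habove 1 h0
          omega
        · rwa [show h = 1 by omega] at htop
      · rcases lt_or_ge h 1 with h0 | h1
        · rwa [show h = 0 by omega] at htop
        · have := hf.coeff_eq_zero_of_le_coeff_succ hp hpm (k := 0)
            (by rw [show 0 + 1 = h by omega]; exact hh.le)
          omega
    · have hv := hf.coeff_sub_eq_ite_of_coeff_eq hp hpm' (b := h - 2)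
        (hf.coeff_eq_of_lt_coeff_add_two hp hpm (by rwa [show h - 2 + 2 = h by omega]))
      have hw₀ := hf.coeff_eq_zero_of_le_coeff_succ hp hpm (k := h - 1)
        (by rw [show h - 1 + 1 = h by omega]; exact hh.le)
      refine hf.hasUWVDecomposition_of_lt hp hpm (lv := h - 1) (by omega)
        (fun s hs => by rw [show h - 1 - 1 - s = h - 2 - s by omega]; exact hv s (by omega))
        (by rwa [show h - 1 + 1 = h by omega]) (by omega) (fun k hk => habove k (by omega))
  · have hv := hf.coeff_sub_eq_ite_of_coeff_eq hp hpm' htop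
    refine hf.hasUWVDecomposition_of_lt hp hpm (lv := h + 1) (by omega)
      (fun s hs => by rw [show h + 1 - 1 - s = h - s by omega]; exact hv s (by omega))
      (by have := habove (h + 1 + 1) (by omega); omega) (by have := habove (h + 1) (by omega); omega)
      (fun k hk => habove k (by omega))

end IsReducedDigitPoly

theorem exists_isDigitPoly_aeval_eq {β : ℝ} {m : ℕ} {y : ℝ} (hy : y ∈ Xspec β m) :
    ∃ f : ℤ[X], IsDigitPoly m f ∧ aeval β f = y := by
  obtain ⟨n, c, hc, rfl⟩ := hy
  refine ⟨∑ j ∈ Finset.range (n + 1), C (c j : ℤ) * X ^ j, fun i => ?_, by simp⟩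
  simp only [finsetSum_coeff, coeff_C_mul_X_pow, Finset.sum_ite_eq, Finset.mem_range]
  split_ifs with hi
  · exact ⟨by positivity, by exact_mod_cast hc i (by omega)⟩
  · exact ⟨le_rfl, by positivity⟩

theorem aeval_eq_of_dvd_sub {β : ℝ} {p : ℤ} (heq : β ^ 2 = p * β + 1) {f g : ℤ[X]}
    (hdvd : X ^ 2 - C p * X - 1 ∣ g - f) : aeval β g = aeval β f := by
  obtain ⟨q, hq⟩ := hdvd
  rw [← sub_eq_zero, ← map_sub, hq, map_mul]
  simp [heq]

theorem le_floor_of_sq_eq_mul_add_one {β : ℝ} {p : ℤ} (hβ : 0 < β) (heq : β ^ 2 = p * β + 1) :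
    p ≤ ⌊β⌋ :=
  Int.le_floor.mpr (by nlinarith)

/-- Lemma (case `β² = pβ + 1`, `p ≥ 1`, `m ≥ ⌊β⌋ = p`): every `y ∈ X^m(β)` has a
representation whose digit string (most significant first) is `u w v`, where `v` is a
prefix of `(m 0)^ω`, `w` is empty or `c d` with `c, d ≤ m - 1` and (`d ≥ 1 → c ≤ p - 1`),
and `u` has digits in `{0,…,p}`. The digits are `r_k`, `r_0` least significant; `v`
occupies positions `k < lv`, `w` positions `lv ≤ k < lv + lw`, `u` positions
`lv + lw ≤ k < n`. -/
theorem spectrum_representation_plus_case (β : ℝ) (p : ℤ)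
    (hβ : 1 < β) (hp : 1 ≤ p) (heq : β ^ 2 = p * β + 1)
    (m : ℕ) (hm : ⌊β⌋ ≤ (m : ℤ)) :
    ∀ y ∈ Xspec β m, ∃ (n : ℕ) (r : ℕ → ℤ),
      y = ∑ k ∈ Finset.range n, (r k : ℝ) * β ^ k ∧
      (∀ k < n, 0 ≤ r k ∧ r k ≤ (m : ℤ)) ∧
      ∃ lv lw : ℕ, (lw = 0 ∨ lw = 2) ∧ lv + lw ≤ n ∧
        (∀ s < lv, r (lv - 1 - s) = if s % 2 = 0 then (m : ℤ) else 0) ∧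
        (lw = 2 →
          0 ≤ r (lv + 1) ∧ r (lv + 1) ≤ (m : ℤ) - 1 ∧
          0 ≤ r lv ∧ r lv ≤ (m : ℤ) - 1 ∧
          (1 ≤ r lv → r (lv + 1) ≤ p - 1)) ∧
        (∀ k, lv + lw ≤ k → k < n → 0 ≤ r k ∧ r k ≤ p) := by
  intro y hy
  have hpm : p ≤ m := (le_floor_of_sq_eq_mul_add_one (by linarith) heq).trans hm
  obtain ⟨f, hf, rfl⟩ := exists_isDigitPoly_aeval_eq hy
  obtain ⟨g, hg, hdvd⟩ := exists_isReducedDigitPoly (p := p) hf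
  refine ⟨g.natDegree + 3, g.coeff, ?_, fun k _ => hg.1 k, hg.hasUWVDecomposition hp hpm⟩
  rw [← aeval_eq_of_dvd_sub heq hdvd, aeval_eq_sum_range' (n := g.natDegree + 3) (by omega)]
  simp [zsmul_eq_mul]
end

section
/- Let β > 1 be the root of x² − px − 1 with integer p ≥ 1, let m ∈ ℕ with m > ⌊β⌋ = p, and for k ∈ ℕ set y_k = −β^{2k} + m ∑_{i=0}^{k−1} β^{2i}. Then y_k ∈ Σ_β(Ω) with Ω = ( −mβ/(β² − 1), mβ²/(β² − 1) ), but y_k ∉ X^m(β). -/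
/-!
Any ℕ-combination of powers of a root `x` of `x² = px + 1` equals `a + b x` with `a, b ∈ ℕ`
independent of the root, and `β` is irrational, so conjugation `a + bβ ↦ a + bβ'` is well defined.

The conjugate of `y_k` is `-r^k + m (1 + r + ⋯ + r^(k-1))` with `r = β'² = β⁻² < 1`; the geometric
series puts it in `Ω`.

If `y_k = ∑ a_j β^j` with digits in `[0, m]`, moving `-β^(2k)` and the digits of index `≥ 2k` to one
side and dividing by `β^(2k)` gives `1 + ∑ a_(2k+i) β^i = β' ∑ d_j β'^(2k-1-j)` with `d_j ∈ ℕ`: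
the powers of `β' = -1/β` alternate in sign exactly as the coefficients `m·[j even] - a_j` do.
The left side has a nonnegative `β`-coordinate, the right side a nonpositive one; both vanish,
which forces `1 + ⋯ = 0`.
-/

open Finset

section QuadraticUnit

variable {R : Type*} [CommRing R] (p : ℕ)

theorem exists_pow_eq_add_mul (j : ℕ) :
    ∃ a b : ℕ, ∀ x : R, x ^ 2 = p * x + 1 → x ^ j = a + b * x := by
  induction j with
  | zero => exact ⟨1, 0, fun x _ => by simp⟩
  | succ j ih =>
    obtain ⟨a, b, h⟩ := ih
    refine ⟨b, a + p * b, fun x hx => ?_⟩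
    rw [pow_succ, h x hx]
    push_cast
    linear_combination b * hx

theorem exists_sum_mul_pow_eq_add_mul (s : Finset ℕ) (c e : ℕ → ℕ) :
    ∃ a b : ℕ, ∀ x : R, x ^ 2 = p * x + 1 → ∑ j ∈ s, (c j : R) * x ^ e j = a + b * x := by
  induction s using Finset.induction_on with
  | empty => exact ⟨0, 0, fun x _ => by simp⟩
  | insert j s hj ih =>
    obtain ⟨a, b, h⟩ := ih
    obtain ⟨a', b', h'⟩ := exists_pow_eq_add_mul (R := R) p (e j)
    refine ⟨c j * a' + a, c j * b' + b, fun x hx => ?_⟩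
    rw [sum_insert hj, h x hx, h' x hx]
    push_cast
    ring

end QuadraticUnit

theorem Int.sq_ne_sq_add_four {p : ℤ} (hp : 1 ≤ p) (y : ℤ) : y ^ 2 ≠ p ^ 2 + 4 := by
  intro h
  have hlow : p < |y| := by nlinarith [sq_abs y, abs_nonneg y]
  have hupp : |y| < p + 2 := by nlinarith [sq_abs y, abs_nonneg y]
  have hy : |y| = p + 1 := by omega
  have : 2 * p = 3 := by nlinarith [sq_abs y]
  omega

theorem irrational_of_sq_eq_mul_add_one {p : ℕ} (hp : 1 ≤ p) {β : ℝ}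
    (hβ : β ^ 2 = p * β + 1) : Irrational β := by
  have hsq : (2 * β - p) ^ 2 = ((p ^ 2 + 4 : ℤ) : ℝ) := by
    push_cast
    linear_combination 4 * hβ
  have hirr : Irrational (2 * β - p) := by
    refine irrational_nrt_of_notint_nrt 2 _ hsq ?_ two_pos
    rintro ⟨y, hy⟩
    refine Int.sq_ne_sq_add_four (p := p) (by exact_mod_cast hp) y ?_
    exact_mod_cast hy ▸ hsq
  rintro ⟨r, rfl⟩
  exact hirr ⟨2 * r - p, by push_cast; ring⟩

theorem one_add_sum_ne_conj_mul_sum {p : ℕ} (hp : 1 ≤ p) {β : ℝ} (hβ : β ^ 2 = p * β + 1)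
    (s t : Finset ℕ) (c e d f : ℕ → ℕ) :
    1 + ∑ j ∈ s, (c j : ℝ) * β ^ e j ≠ (p - β) * ∑ j ∈ t, (d j : ℝ) * (p - β) ^ f j := by
  obtain ⟨a, b, hab⟩ := exists_sum_mul_pow_eq_add_mul (R := ℝ) p s c e
  obtain ⟨a', b', hab'⟩ := exists_sum_mul_pow_eq_add_mul (R := ℝ) p t d f
  have hconj : (p - β) ^ 2 = p * (p - β) + 1 := by linear_combination hβ
  rw [hab β hβ, hab' _ hconj]
  intro h
  have hcoord :
      ((1 + a - b' - p * (a' + p * b') : ℤ) : ℝ) + ((b + a' + p * b' : ℕ) : ℝ) * β = 0 := by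
    push_cast
    linear_combination h + b' * hconj
  rcases Nat.eq_zero_or_pos (b + a' + p * b') with h0 | hpos
  · obtain ⟨rfl, rfl⟩ : a' = 0 ∧ b' = 0 :=
      ⟨by omega, (Nat.mul_eq_zero.mp (by omega : p * b' = 0)).resolve_left (by omega)⟩
    obtain rfl : b = 0 := by omega
    norm_num at hcoord
    exact absurd hcoord (by positivity)
  · have hirr := irrational_of_sq_eq_mul_add_one hp hβ
    exact ((hirr.natCast_mul hpos.ne').intCast_add _).ne_zero hcoord

theorem sum_range_two_mul_ite_even {M : Type*} [AddCommMonoid M] (f : ℕ → M) (k : ℕ) :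
    ∑ j ∈ range (2 * k), (if Even j then f j else 0) = ∑ i ∈ range k, f (2 * i) := by
  induction k with
  | zero => simp
  | succ k ih =>
    rw [show 2 * (k + 1) = 2 * k + 1 + 1 by ring, sum_range_succ, sum_range_succ, ih,
      sum_range_succ, if_pos (even_two_mul k),
      if_neg (Nat.not_even_iff_odd.mpr (odd_two_mul_add_one k)),
      add_zero]

theorem pow_mul_mul_pow_eq_neg_one_pow_mul {β q : ℝ} (h : β * q = -1) {j k : ℕ} (hj : j < 2 * k) :
    β ^ (2 * k) * (q * q ^ (2 * k - 1 - j)) = (-1) ^ j * β ^ j := by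
  obtain ⟨i, hi⟩ := Nat.exists_eq_add_of_lt hj
  have hparity : (-1 : ℝ) ^ (i + 1) = (-1) ^ j := by
    have heven : (-1 : ℝ) ^ j * (-1) ^ (i + 1) = 1 := by
      rw [← pow_add, ← add_assoc, ← hi, pow_mul]
      norm_num
    rcases neg_one_pow_eq_or ℝ j with h | h <;> rw [h] at heven ⊢ <;> linarith
  calc β ^ (2 * k) * (q * q ^ (2 * k - 1 - j)) = β ^ j * (β * q) ^ (i + 1) := by
        rw [hi, show j + i + 1 - 1 - j = i by omega, ← pow_succ', mul_pow]
        ring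
    _ = (-1) ^ j * β ^ j := by rw [h, hparity, mul_comm]

theorem ite_even_sub_eq_neg_one_pow_mul {m a : ℕ} (ha : a ≤ m) (j : ℕ) :
    (if Even j then (m : ℝ) else 0) - a = (-1) ^ j * ((if Even j then m - a else a : ℕ) : ℝ) := by
  rcases Nat.even_or_odd j with hj | hj
  · simp [hj, hj.neg_one_pow, Nat.cast_sub ha]
  · simp [Nat.not_even_iff_odd.mpr hj, hj.neg_one_pow]

theorem neg_pow_add_sum_ne_sum_digits {p : ℕ} (hp : 1 ≤ p) {β : ℝ} (hβ : β ^ 2 = p * β + 1)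
    {m : ℕ} (a : ℕ → ℕ) (ha : ∀ j, a j ≤ m) (k N : ℕ) :
    -β ^ (2 * k) + m * ∑ i ∈ range k, β ^ (2 * i) ≠ ∑ j ∈ range (2 * k + N), (a j : ℝ) * β ^ j := by
  intro h
  set d : ℕ → ℕ := fun j => if Even j then m - a j else a j
  have hβq : β * (p - β) = -1 := by linear_combination -hβ
  have hlow : m * ∑ i ∈ range k, β ^ (2 * i) - ∑ j ∈ range (2 * k), (a j : ℝ) * β ^ j
      = β ^ (2 * k) * ((p - β) * ∑ j ∈ range (2 * k), (d j : ℝ) * (p - β) ^ (2 * k - 1 - j)) := by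
    rw [mul_sum, ← sum_range_two_mul_ite_even (fun j ↦ (m : ℝ) * β ^ j), mul_sum, mul_sum,
      ← sum_sub_distrib]
    refine sum_congr rfl fun j hj => ?_
    rw [mul_left_comm (p - β : ℝ), mul_left_comm _ (d j : ℝ),
      pow_mul_mul_pow_eq_neg_one_pow_mul hβq (mem_range.mp hj), ← mul_assoc,
      mul_comm _ ((-1 : ℝ) ^ j),
      ← ite_even_sub_eq_neg_one_pow_mul (ha j), sub_mul, ite_mul, zero_mul]
  have hsplit : ∑ j ∈ range (2 * k + N), (a j : ℝ) * β ^ j = ∑ j ∈ range (2 * k), (a j : ℝ) * β ^ j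
      + β ^ (2 * k) * ∑ i ∈ range N, (a (2 * k + i) : ℝ) * β ^ i := by
    rw [sum_range_add, mul_sum]
    congr 1
    exact sum_congr rfl fun i _ => by rw [pow_add]; ring
  have hβ0 : β ^ (2 * k) ≠ 0 := pow_ne_zero _ (by rintro rfl; norm_num at hβ)
  refine one_add_sum_ne_conj_mul_sum hp hβ (range N) (range (2 * k)) (fun i => a (2 * k + i))
    (fun i => i) d (fun j => 2 * k - 1 - j) (mul_left_cancel₀ hβ0 ?_)
  linear_combination hlow - h - hsplit

theorem exists_digits_of_mem_Xspec {β : ℝ} {m : ℕ} {x : ℝ} (hx : x ∈ Xspec β m) (M : ℕ) :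
    ∃ (N : ℕ) (a : ℕ → ℕ), (∀ j, a j ≤ m) ∧ x = ∑ j ∈ range (M + N), (a j : ℝ) * β ^ j := by
  obtain ⟨n, c, hc, rfl⟩ := hx
  refine ⟨n + 1, fun j => if j ≤ n then c j else 0, fun j => ?_, ?_⟩
  · dsimp only
    split_ifs with hj
    exacts [hc j hj, Nat.zero_le m]
  · rw [add_comm M, sum_range_add _ (n + 1) M, sum_eq_zero (s := range M) fun j _ => by
      simp only [if_neg (show ¬n + 1 + j ≤ n by omega), Nat.cast_zero, zero_mul], add_zero]
    exact sum_congr rfl fun j hj => by simp only [if_pos (Nat.lt_succ_iff.mp (mem_range.mp hj))]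

theorem neg_pow_add_sum_not_mem_Xspec {p : ℕ} (hp : 1 ≤ p) {β : ℝ} (hβ : β ^ 2 = p * β + 1)
    (m k : ℕ) : -β ^ (2 * k) + m * ∑ i ∈ range k, β ^ (2 * i) ∉ Xspec β m := fun hx ↦ by
  obtain ⟨N, a, ha, h⟩ := exists_digits_of_mem_Xspec hx (2 * k)
  exact neg_pow_add_sum_ne_sum_digits hp hβ a ha k N h

theorem neg_pow_add_sum_mem_Ioo {β q : ℝ} (hβ : 1 < β) (hq : β * q = -1) {m : ℝ} (hm : β ≤ m)
    (k : ℕ) : -q ^ (2 * k) + m * ∑ i ∈ range k, q ^ (2 * i) ∈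
      Set.Ioo (-(m * β) / (β ^ 2 - 1)) (m * β ^ 2 / (β ^ 2 - 1)) := by
  simp only [pow_mul]
  set r := q ^ 2
  have hr : r * β ^ 2 = 1 := by rw [← mul_pow, mul_comm, hq]; norm_num
  have hr0 : 0 < r := by nlinarith
  have hr1 : r < 1 := by nlinarith
  have hrk : 0 < r ^ k := pow_pos hr0 k
  have hrk1 : r ^ k ≤ 1 := pow_le_one₀ hr0.le hr1.le
  have hS : 0 ≤ ∑ i ∈ range k, r ^ i := sum_nonneg fun i _ => (pow_pos hr0 i).le
  have hgeom : (∑ i ∈ range k, r ^ i) * (1 - r) = 1 - r ^ k := geom_sum_mul_neg r k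
  have hβ2 : 0 < β ^ 2 - 1 := by nlinarith
  constructor
  · have hy : -1 ≤ -r ^ k + m * ∑ i ∈ range k, r ^ i := by nlinarith
    rw [div_lt_iff₀ hβ2]
    nlinarith
  · have hy : (-r ^ k + m * ∑ i ∈ range k, r ^ i) * (1 - r) < m := by nlinarith
    rw [lt_div_iff₀ hβ2]
    have hβr : β ^ 2 - 1 = β ^ 2 * (1 - r) := by linear_combination hr
    rw [hβr, mul_left_comm]
    nlinarith

theorem neg_pow_add_sum_mem_sigmaCP {p : ℕ} {β : ℝ} (hβ1 : 1 < β) (hβ : β ^ 2 = p * β + 1)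
    {m : ℕ} (hm : β ≤ m) (k : ℕ) : -β ^ (2 * k) + m * ∑ i ∈ range k, β ^ (2 * i) ∈
      sigmaCP β (p - β) (Set.Ioo (-(m * β) / (β ^ 2 - 1)) (m * β ^ 2 / (β ^ 2 - 1))) := by
  obtain ⟨a, b, hab⟩ := exists_sum_mul_pow_eq_add_mul (R := ℝ) p (range k) (fun _ => m) (2 * ·)
  obtain ⟨a', b', hab'⟩ := exists_pow_eq_add_mul (R := ℝ) p (2 * k)
  have hcoord : ∀ x : ℝ, x ^ 2 = p * x + 1 →
      -x ^ (2 * k) + m * ∑ i ∈ range k, x ^ (2 * i) =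
        ((a - a' : ℤ) : ℝ) + ((b - b' : ℤ) : ℝ) * x := by
    intro x hx
    rw [mul_sum, hab x hx, hab' x hx]
    push_cast
    ring
  refine ⟨_, _, hcoord β hβ, ?_⟩
  rw [← hcoord _ (by linear_combination hβ)]
  exact neg_pow_add_sum_mem_Ioo hβ1 (by linear_combination -hβ) hm k

/-- Corollary (case `β² = pβ + 1`, `p ≥ 1`, `m > ⌊β⌋`): for `k ∈ ℕ`, the numbers
`y_k = -β^{2k} + m ∑_{i<k} β^{2i}` lie in `Σ_β((-mβ/(β²-1), mβ²/(β²-1)))` but not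
in `X^m(β)`. -/
theorem cutProject_point_not_in_spectrum_plus (β : ℝ) (p : ℤ)
    (hβ : 1 < β) (hp : 1 ≤ p) (heq : β ^ 2 = p * β + 1)
    (m : ℕ) (hm : ⌊β⌋ < (m : ℤ)) (k : ℕ) :
    (-β ^ (2 * k) + (m : ℝ) * ∑ i ∈ Finset.range k, β ^ (2 * i)) ∈
        sigmaCP β ((p : ℝ) - β)
          (Set.Ioo (-((m : ℝ) * β) / (β ^ 2 - 1)) ((m : ℝ) * β ^ 2 / (β ^ 2 - 1))) ∧
    (-β ^ (2 * k) + (m : ℝ) * ∑ i ∈ Finset.range k, β ^ (2 * i)) ∉ Xspec β m := by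
  lift p to ℕ using by omega
  rw [Int.cast_natCast] at heq ⊢
  have hβm : β ≤ m := (Int.lt_floor_add_one β).le.trans (by exact_mod_cast hm)
  exact ⟨neg_pow_add_sum_mem_sigmaCP hβ heq hβm k,
    neg_pow_add_sum_not_mem_Xspec (by exact_mod_cast hp) heq m k⟩
end

section
/- Let γ ∈ ℝ with |γ| > 1 and let 𝒜 = {a, a+1, …, A} ⊂ ℤ with a ≤ 0 ≤ A and A − a > |γ| − 1. Let 𝓘_{γ,𝒜} be the set of all real numbers of the form ∑_{i=0}^∞ D_i γ^{−i} with all D_i ∈ 𝒜. Then 𝓘_{γ,𝒜} = [ aγ/(γ−1), Aγ/(γ−1) ] if γ > 1, and 𝓘_{γ,𝒜} = [ (A + aγ)·γ/(γ²−1), (Aγ + a)·γ/(γ²−1) ] if γ < −1. -/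
/-- The set `𝓘_{γ,𝒜}` of real numbers having a `(γ,𝒜)`-representation
`w = ∑_{i=0}^∞ D_i / γ^i` with digits `D_i ∈ {a,…,A}`. -/
def repInterval (γ : ℝ) (a A : ℤ) : Set ℝ :=
  {w | ∃ D : ℕ → ℤ, (∀ i, a ≤ D i ∧ D i ≤ A) ∧ w = ∑' i : ℕ, (D i : ℝ) / γ ^ i}

/-!
The interval `I = [m, M]` of the theorem is the attractor of the maps `φ_d x = d + x / γ`,
`d ∈ 𝒜`. Its endpoints are chosen so that `φ_a` and `φ_A` send `I` onto subintervals sharing the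
left, respectively right, endpoint of `I`, hence every `φ_d` maps `I` into itself; since `I` is
closed, every limit `∑ D_i / γ^i = lim φ_{D_0} ∘ ⋯ ∘ φ_{D_{n-1}} (p)` lies in `I`. Conversely
`A - a > |γ| - 1` says exactly that the images `φ_d I`, of length `|I| / |γ| ≥ 1`, overlap for
consecutive digits and so cover `I`; choosing at each step a digit whose image contains the current
point produces a representation, because the remainders stay in the bounded set `I`.
-/

open Filter Topology Finset

section

variable {γ : ℝ} {a A : ℤ}

lemma summable_div_pow_of_abs_le (hγ : 1 < |γ|) {f : ℕ → ℝ} {C : ℝ} (hf : ∀ i, |f i| ≤ C) :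
    Summable fun i => f i / γ ^ i := by
  have hr : |γ|⁻¹ < 1 := inv_lt_one_of_one_lt₀ hγ
  refine ((summable_geometric_of_lt_one (by positivity) hr).mul_left C).of_norm_bounded
    fun i => ?_
  rw [Real.norm_eq_abs, abs_div, abs_pow, div_eq_mul_inv, ← inv_pow]
  exact mul_le_mul_of_nonneg_right (hf i) (by positivity)

lemma tendsto_sum_range_add_div_pow (hγ : 1 < |γ|) {f x : ℕ → ℝ} {C C' : ℝ}
    (hf : ∀ i, |f i| ≤ C) (hx : ∀ n, |x n| ≤ C') :
    Tendsto (fun n => ∑ i ∈ range n, f i / γ ^ i + x n / γ ^ n) atTop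
      (𝓝 (∑' i, f i / γ ^ i)) := by
  simpa using (summable_div_pow_of_abs_le hγ hf).hasSum.tendsto_sum_nat.add
    (summable_div_pow_of_abs_le hγ hx).tendsto_atTop_zero

lemma abs_digit_le {D : ℕ → ℤ} (hD : ∀ i, a ≤ D i ∧ D i ≤ A) (i : ℕ) :
    |(D i : ℝ)| ≤ max |(a : ℝ)| |(A : ℝ)| :=
  abs_le_max_abs_abs (by exact_mod_cast (hD i).1) (by exact_mod_cast (hD i).2)

lemma sum_range_add_div_pow_mem {S : Set ℝ}
    (hmaps : ∀ d : ℤ, a ≤ d → d ≤ A → Set.MapsTo (fun x => d + x / γ) S S)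
    {p : ℝ} (hp : p ∈ S) {D : ℕ → ℤ} (hD : ∀ i, a ≤ D i ∧ D i ≤ A) (n : ℕ) :
    ∑ i ∈ range n, (D i : ℝ) / γ ^ i + p / γ ^ n ∈ S := by
  induction n generalizing D with
  | zero => simpa using hp
  | succ n ih =>
    have hshift : ∑ i ∈ range (n + 1), (D i : ℝ) / γ ^ i + p / γ ^ (n + 1) =
        D 0 + (∑ i ∈ range n, (D (i + 1) : ℝ) / γ ^ i + p / γ ^ n) / γ := by
      simp only [sum_range_succ', pow_succ, add_div, sum_div, div_div]
      ring
    rw [hshift]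
    exact hmaps _ (hD 0).1 (hD 0).2 (ih fun i => hD (i + 1))

lemma repInterval_subset {S : Set ℝ} (hγ : 1 < |γ|) (hS : IsClosed S) (hne : S.Nonempty)
    (hmaps : ∀ d : ℤ, a ≤ d → d ≤ A → Set.MapsTo (fun x => d + x / γ) S S) :
    repInterval γ a A ⊆ S := by
  rintro w ⟨D, hD, rfl⟩
  obtain ⟨p, hp⟩ := hne
  exact hS.mem_of_tendsto
    (tendsto_sum_range_add_div_pow hγ (abs_digit_le hD) (x := fun _ => p) fun _ => le_rfl)
    (Eventually.of_forall (sum_range_add_div_pow_mem hmaps hp hD))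

lemma subset_repInterval {S : Set ℝ} (hγ : 1 < |γ|) (hS : Bornology.IsBounded S)
    (hcover : ∀ x ∈ S, ∃ d : ℤ, a ≤ d ∧ d ≤ A ∧ γ * (x - d) ∈ S) :
    S ⊆ repInterval γ a A := by
  intro w hw
  have hγ0 : γ ≠ 0 := abs_pos.mp (one_pos.trans hγ)
  obtain ⟨C, hC⟩ := hS.exists_norm_le
  choose! d hd using hcover
  set x : ℕ → ℝ := fun n => (fun y => γ * (y - d y))^[n] w
  have hx_succ : ∀ n, x (n + 1) = γ * (x n - d (x n)) := fun n =>
    Function.iterate_succ_apply' _ n w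
  have hxS : ∀ n, x n ∈ S := by
    intro n
    induction n with
    | zero => exact hw
    | succ n ih => rw [hx_succ]; exact (hd _ ih).2.2
  have hsum : ∀ n, ∑ i ∈ range n, (d (x i) : ℝ) / γ ^ i + x n / γ ^ n = w := by
    intro n
    induction n with
    | zero => simp [x]
    | succ n ih =>
      rw [← ih, sum_range_succ, hx_succ, pow_succ]
      field_simp
      ring
  have hD (n : ℕ) : a ≤ d (x n) ∧ d (x n) ≤ A := ⟨(hd _ (hxS n)).1, (hd _ (hxS n)).2.1⟩
  exact ⟨fun n => d (x n), hD, tendsto_nhds_unique ((tendsto_congr hsum).2 tendsto_const_nhds)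
    (tendsto_sum_range_add_div_pow hγ (abs_digit_le hD) fun n => hC _ (hxS n))⟩

lemma exists_int_mem_Icc_of_one_le (haA : a ≤ A) {L U : ℝ} (hU : a ≤ U) (hL : L ≤ A)
    (hLU : L + 1 ≤ U) : ∃ d : ℤ, a ≤ d ∧ d ≤ A ∧ L ≤ d ∧ (d : ℝ) ≤ U := by
  refine ⟨max a ⌈L⌉, le_max_left _ _, max_le haA (Int.ceil_le.2 hL), ?_, ?_⟩ <;>
    rw [Int.cast_max]
  · exact le_max_of_le_right (Int.le_ceil L)
  · exact max_le hU (by linarith [Int.ceil_lt_add_one L])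

theorem repInterval_eq_Icc_of_preimage (hγ : 1 < |γ|) (haA : a ≤ A) {m M lo hi : ℝ}
    (hpre : (γ * ·) ⁻¹' Set.Icc m M = Set.Icc lo hi) (hm : m = a + lo) (hM : M = A + hi)
    (hlen : 1 ≤ hi - lo) : repInterval γ a A = Set.Icc m M := by
  have hγ0 : γ ≠ 0 := abs_pos.mp (one_pos.trans hγ)
  have haA' : (a : ℝ) ≤ A := by exact_mod_cast haA
  have mem_iff (y : ℝ) : γ * y ∈ Set.Icc m M ↔ y ∈ Set.Icc lo hi := Set.ext_iff.1 hpre y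
  refine (repInterval_subset hγ isClosed_Icc (Set.nonempty_Icc.2 (by linarith)) ?_).antisymm
    (subset_repInterval hγ (Metric.isBounded_Icc m M) ?_)
  · intro d had hdA x hx
    have hxγ := (mem_iff (x / γ)).1 (by rwa [mul_div_cancel₀ x hγ0])
    have had' : (a : ℝ) ≤ d := by exact_mod_cast had
    have hdA' : (d : ℝ) ≤ A := by exact_mod_cast hdA
    exact ⟨by linarith [hxγ.1], by linarith [hxγ.2]⟩
  · intro x hx
    obtain ⟨d, had, hdA, hLd, hdU⟩ :=
      exists_int_mem_Icc_of_one_le haA (L := x - hi) (U := x - lo)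
        (by linarith [hx.1]) (by linarith [hx.2]) (by linarith)
    exact ⟨d, had, hdA, (mem_iff _).2 ⟨by linarith, by linarith⟩⟩

end

/-- For `|γ| > 1` and an alphabet `𝒜 = {a,…,A}` with `a ≤ 0 ≤ A` and `A - a > |γ| - 1`,
the set `𝓘_{γ,𝒜}` is the indicated closed interval. -/
theorem repInterval_eq_Icc (γ : ℝ) (a A : ℤ)
    (hγ : 1 < |γ|) (ha : a ≤ 0) (hA : 0 ≤ A)
    (hsize : (A : ℝ) - (a : ℝ) > |γ| - 1) :
    (1 < γ → repInterval γ a A =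
      Set.Icc ((a : ℝ) * γ / (γ - 1)) ((A : ℝ) * γ / (γ - 1))) ∧
    (γ < -1 → repInterval γ a A =
      Set.Icc (((A : ℝ) + (a : ℝ) * γ) * γ / (γ ^ 2 - 1))
              (((A : ℝ) * γ + (a : ℝ)) * γ / (γ ^ 2 - 1))) := by
  have haA : a ≤ A := ha.trans hA
  refine ⟨fun hγ₁ => ?_, fun hγ₁ => ?_⟩
  · rw [abs_of_pos (by linarith)] at hsize
    have hγ0 : γ ≠ 0 := by linarith
    have hγ1 : γ - 1 ≠ 0 := by linarith
    refine repInterval_eq_Icc_of_preimage hγ haA (Set.preimage_const_mul_Icc₀ _ _ (by linarith))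
      (by field_simp; ring) (by field_simp; ring) ?_
    have hlen : (A : ℝ) * γ / (γ - 1) / γ - a * γ / (γ - 1) / γ = (A - a) / (γ - 1) := by
      field_simp
    rw [hlen, one_le_div (by linarith)]
    linarith
  · rw [abs_of_neg (by linarith)] at hsize
    have hγ0 : γ ≠ 0 := by linarith
    have hγ2 : γ ^ 2 - 1 ≠ 0 := by nlinarith
    refine repInterval_eq_Icc_of_preimage hγ haA
      (Set.preimage_const_mul_Icc_of_neg _ _ (by linarith)) (by field_simp; ring)
      (by field_simp; ring) ?_
    have hlen : ((A : ℝ) + a * γ) * γ / (γ ^ 2 - 1) / γ - (A * γ + a) * γ / (γ ^ 2 - 1) / γ =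
        (A - a) / (-γ - 1) := by
      have : -γ - 1 ≠ 0 := by linarith
      field_simp
      ring
    rw [hlen, one_le_div (by linarith)]
    linarith
end
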